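/- arXiv:2512.15336 — 3 statements merged into one kernel-verified Lean document; each statement's English description precedes it below -/
import Mathlib

section
/- Let F : ℝ^m → ℝ and c₁,…,c_l : ℝ^m → ℝ (with l ≤ m) be C^k functions (k ≥ 1) satisfying F(0) = 0 and cᵢ(0) = 0 for i = 1,…,l. Assume there is a neighborhood N of 0 such that F(x) = 0 for every x ∈ N with c₁(x) = c₂(x) = ⋯ = c_l(x) = 0, and that the Jacobian matrix of (c₁,…,c_l) at x = 0 has full rank l. Then there exist a neighborhood N* ⊆ N of 0 and C^{k−1} functions F₁,…,F_l : N* → ℝ such that F(x) = Σ_{i=1}^{l} cᵢ(x)Fᵢ(x) for all x ∈ N*. Moreover, if in addition the gradient ∇F(0) = 0, then F₁(0) = F₂(0) = ⋯ = F_l(0) = 0. -/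
open scoped Topology BigOperators
open Set Asymptotics MeasureTheory intervalIntegral

noncomputable section

/-- The planar vector field `Z = (f, g)` at parameter `α`. -/
def Zv {m : ℕ} (f g : ℝ → ℝ → (Fin m → ℝ) → ℝ) (α : Fin m → ℝ) (p : ℝ × ℝ) : ℝ × ℝ :=
  (f p.1 p.2 α, g p.1 p.2 α)

/-- `γ` is a solution of `(ẋ, ẏ) = Z(x, y; α)` on the time set `s`. -/
def IsSolOn {m : ℕ} (f g : ℝ → ℝ → (Fin m → ℝ) → ℝ) (α : Fin m → ℝ)
    (γ : ℝ → ℝ × ℝ) (s : Set ℝ) : Prop :=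
  ∀ t ∈ s, HasDerivAt γ (Zv f g α (γ t)) t

/-- Partial derivative in `x` of a function `h(x, y; α)`. -/
def pdX {m : ℕ} (h : ℝ → ℝ → (Fin m → ℝ) → ℝ) (x y : ℝ) (α : Fin m → ℝ) : ℝ :=
  deriv (fun x' => h x' y α) x

/-- Partial derivative in `y` of a function `h(x, y; α)`. -/
def pdY {m : ℕ} (h : ℝ → ℝ → (Fin m → ℝ) → ℝ) (x y : ℝ) (α : Fin m → ℝ) : ℝ :=
  deriv (fun y' => h x y' α) y

/-- Second partial derivative in `x`. -/
def pdXX {m : ℕ} (h : ℝ → ℝ → (Fin m → ℝ) → ℝ) (x y : ℝ) (α : Fin m → ℝ) : ℝ :=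
  deriv (fun x' => pdX h x' y α) x

/-- Partial derivative in the parameter direction `αᵢ`. -/
def pdA {m : ℕ} (h : ℝ → ℝ → (Fin m → ℝ) → ℝ) (i : Fin m) (x y : ℝ) (α : Fin m → ℝ) : ℝ :=
  fderiv ℝ (h x y) α (Pi.single i 1)

/-- Mixed partial derivative `∂²h/∂αᵢ∂x`. -/
def pdXA {m : ℕ} (h : ℝ → ℝ → (Fin m → ℝ) → ℝ) (i : Fin m) (x y : ℝ) (α : Fin m → ℝ) : ℝ :=
  fderiv ℝ (fun α' => pdX h x y α') α (Pi.single i 1)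

/-- Divergence `f_x + g_y` of the vector field `Z = (f, g)`. -/
def divZ {m : ℕ} (f g : ℝ → ℝ → (Fin m → ℝ) → ℝ) (α : Fin m → ℝ) (p : ℝ × ℝ) : ℝ :=
  pdX f p.1 p.2 α + pdY g p.1 p.2 α

/-- `λ(t) = exp (∫_t^T (f_x + g_y)(γ(s); 0) ds)` along a curve `γ`, at parameter `0`. -/
def lamF {m : ℕ} (f g : ℝ → ℝ → (Fin m → ℝ) → ℝ) (γ : ℝ → ℝ × ℝ) (T t : ℝ) : ℝ :=
  Real.exp (∫ s in t..T, divZ f g 0 (γ s))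

/-- `κᵢ = ∫_0^T λ(t) (f g_{αᵢ} − g f_{αᵢ})(γ(t); 0) dt`. -/
def kapF {m : ℕ} (f g : ℝ → ℝ → (Fin m → ℝ) → ℝ) (γ : ℝ → ℝ × ℝ) (T : ℝ) (i : Fin m) : ℝ :=
  ∫ t in (0:ℝ)..T, lamF f g γ T t *
    (f (γ t).1 (γ t).2 0 * pdA g i (γ t).1 (γ t).2 0
      - g (γ t).1 (γ t).2 0 * pdA f i (γ t).1 (γ t).2 0)

/-- Partial derivative in `x` of a transition map `σ(x, y; α)`. -/
def sdX {m : ℕ} (σ : ℝ × ℝ → (Fin m → ℝ) → ℝ) (x y : ℝ) (α : Fin m → ℝ) : ℝ :=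
  deriv (fun x' => σ (x', y) α) x

/-- Second partial derivative in `x` of a transition map. -/
def sdXX {m : ℕ} (σ : ℝ × ℝ → (Fin m → ℝ) → ℝ) (x y : ℝ) (α : Fin m → ℝ) : ℝ :=
  deriv (fun x' => sdX σ x' y α) x

/-- Partial derivative of a transition map in the parameter direction `αᵢ`. -/
def sdA {m : ℕ} (σ : ℝ × ℝ → (Fin m → ℝ) → ℝ) (i : Fin m) (x y : ℝ) (α : Fin m → ℝ) : ℝ :=
  fderiv ℝ (σ (x, y)) α (Pi.single i 1)

/-- Mixed partial derivative `∂²σ/∂αᵢ∂x` of a transition map. -/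
def sdXA {m : ℕ} (σ : ℝ × ℝ → (Fin m → ℝ) → ℝ) (i : Fin m) (x y : ℝ) (α : Fin m → ℝ) : ℝ :=
  fderiv ℝ (fun α' => sdX σ x y α') α (Pi.single i 1)

/-- The `Z₂`-symmetric sliding vector field numerator `f^s(x;α)`. -/
def fSlide {m : ℕ} (f g : ℝ → ℝ → (Fin m → ℝ) → ℝ) (x : ℝ) (α : Fin m → ℝ) : ℝ :=
  g x 0 α * f (-x) 0 α - g (-x) 0 α * f x 0 α

/-- The map `𝒯₂(x;α) = σ⁺(x,0;α) − σ⁻(−x,0;α)`. -/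
def T2map {m : ℕ} (σP σM : ℝ × ℝ → (Fin m → ℝ) → ℝ) (x : ℝ) (α : Fin m → ℝ) : ℝ :=
  σP (x, 0) α - σM (-x, 0) α

open Filter

universe u

/-!
Since the differentials of the `cᵢ` at `0` are independent, `x ↦ (c(x), P x)`, with `P` a
projection onto the kernel of the Jacobian, is a local `C^k` diffeomorphism with inverse `ψ`.
In these coordinates `(u, v)` the function `h = F ∘ ψ` vanishes on `u = 0`, so Hadamard's formula
`h(u, v) = h(0, v) + Σᵢ uᵢ ∫₀¹ ∂_{uᵢ} h(t u, v) dt` writes it as `Σᵢ uᵢ hᵢ(u, v)` with `hᵢ` of class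
`C^{k-1}`, and `Fᵢ = hᵢ ∘ (c, P)`. Finally `hᵢ(0, v) = ∂_{uᵢ} h(0, v)`, which vanishes at the base
point when `∇F(0) = 0`.
-/

theorem ContinuousLinearMap.range_pi_eq_top_of_linearIndependent {𝕜 ι E : Type*} [NormedField 𝕜]
    [Fintype ι] [DecidableEq ι] [NormedAddCommGroup E] [NormedSpace 𝕜 E] {ℓ : ι → E →L[𝕜] 𝕜}
    (hℓ : LinearIndependent 𝕜 ℓ) : (ContinuousLinearMap.pi ℓ).range = ⊤ := by
  rw [LinearMap.range_eq_top, ← LinearMap.dualMap_injective_iff, injective_iff_map_eq_zero]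
  intro φ hφ
  have hsum : ∑ i, φ (Pi.single i 1) • ℓ i = 0 := by
    ext x
    have hdecomp : ContinuousLinearMap.pi ℓ x = ∑ i, ℓ i x • Pi.single i 1 := by
      ext j
      simp [Pi.single_apply]
    have hx : φ (ContinuousLinearMap.pi ℓ x) = 0 := LinearMap.congr_fun hφ x
    simpa [hdecomp, mul_comm] using hx
  have hcoeff := Fintype.linearIndependent_iff.1 hℓ _ hsum
  ext i
  simpa using hcoeff i

section ParametricIntegral

-- `B` and `G` share a universe because the induction on `n` replaces `G` by `B →L[ℝ] G`.
variable {B G : Type u} [NormedAddCommGroup B] [NormedSpace ℝ B] [FiniteDimensional ℝ B]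
  [NormedAddCommGroup G] [NormedSpace ℝ G]

theorem hasFDerivAt_intervalIntegral_of_contDiff {g : ℝ × B → G} (hg : ContDiff ℝ 1 g)
    (a b : ℝ) (x₀ : B) :
    HasFDerivAt (fun x => ∫ t in a..b, g (t, x))
      (∫ t in a..b, fderiv ℝ g (t, x₀) ∘L ContinuousLinearMap.inr ℝ ℝ B) x₀ := by
  have hg' : Continuous fun p => fderiv ℝ g p ∘L ContinuousLinearMap.inr ℝ ℝ B :=
    (hg.continuous_fderiv one_ne_zero).clm_comp continuous_const
  obtain ⟨C, hC⟩ := (isCompact_uIcc.prod (isCompact_closedBall x₀ 1)).exists_bound_of_continuousOn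
    hg'.continuousOn
  refine intervalIntegral.hasFDerivAt_integral_of_dominated_of_fderiv_le
    (F' := fun x t => fderiv ℝ g (t, x) ∘L ContinuousLinearMap.inr ℝ ℝ B) (bound := fun _ => C)
    (Metric.ball_mem_nhds x₀ one_pos) ?_ ?_ ?_ ?_ intervalIntegrable_const ?_
  · exact .of_forall fun x => (hg.continuous.comp (by fun_prop)).aestronglyMeasurable
  · exact (hg.continuous.comp (by fun_prop)).intervalIntegrable _ _
  · exact (hg'.comp (by fun_prop)).aestronglyMeasurable
  · exact .of_forall fun t ht x hx =>
      hC (t, x) ⟨uIoc_subset_uIcc ht, Metric.ball_subset_closedBall hx⟩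
  · exact .of_forall fun t _ x _ =>
      ((hg.differentiable one_ne_zero _).hasFDerivAt.comp x (hasFDerivAt_prodMk_right t x))

theorem contDiff_intervalIntegral_of_contDiff [CompleteSpace G] {n : ℕ} {g : ℝ × B → G}
    (hg : ContDiff ℝ n g) (a b : ℝ) : ContDiff ℝ n fun x => ∫ t in a..b, g (t, x) := by
  induction n generalizing G with
  | zero =>
    rw [Nat.cast_zero, contDiff_zero] at hg ⊢
    exact intervalIntegral.continuous_parametric_intervalIntegral_of_continuous'
      (f := fun x t => g (t, x)) (hg.comp continuous_swap) a b
  | succ n ih =>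
    have hg1 : ContDiff ℝ 1 g := hg.of_le (by exact_mod_cast Nat.le_add_left 1 n)
    rw [Nat.cast_succ, contDiff_succ_iff_fderiv] at hg ⊢
    refine ⟨fun x => (hasFDerivAt_intervalIntegral_of_contDiff hg1 a b x).differentiableAt,
      by simp, ?_⟩
    rw [funext fun x => (hasFDerivAt_intervalIntegral_of_contDiff hg1 a b x).fderiv]
    exact ih (hg.2.2.clm_comp contDiff_const)

end ParametricIntegral

section Hadamard

variable {ι Y G : Type u} [DecidableEq ι] [NormedAddCommGroup Y] [NormedSpace ℝ Y]
  [NormedAddCommGroup G] [NormedSpace ℝ G] [CompleteSpace G]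

def hadamardQuotient (h : (ι → ℝ) × Y → G) (i : ι) (p : (ι → ℝ) × Y) : G :=
  ∫ t in (0 : ℝ)..1, fderiv ℝ h (t • p.1, p.2) (Pi.single i 1, 0)

theorem hadamardQuotient_zero_fst (h : (ι → ℝ) × Y → G) (i : ι) (v : Y) :
    hadamardQuotient h i (0, v) = fderiv ℝ h (0, v) (Pi.single i 1, 0) := by
  simp [hadamardQuotient]

theorem eq_add_sum_smul_hadamardQuotient [Fintype ι] {h : (ι → ℝ) × Y → G}
    (hh : ContDiff ℝ 1 h) (p : (ι → ℝ) × Y) :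
    h p = h (0, p.2) + ∑ i, p.1 i • hadamardQuotient h i p := by
  obtain ⟨u, v⟩ := p
  have hderiv (t : ℝ) :
      HasDerivAt (fun s : ℝ => h (s • u, v)) (fderiv ℝ h (t • u, v) (u, 0)) t := by
    have hline : HasDerivAt (fun s : ℝ => (s • u, v)) (u, 0) t := by
      simpa using ((hasDerivAt_id t).smul_const u).prodMk (hasDerivAt_const t v)
    exact (hh.differentiable one_ne_zero _).hasFDerivAt.comp_hasDerivAt t hline
  have hcont : Continuous fun t : ℝ => fderiv ℝ h (t • u, v) :=
    (hh.continuous_fderiv one_ne_zero).comp (by fun_prop)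
  have hsplit (t : ℝ) : fderiv ℝ h (t • u, v) (u, 0)
      = ∑ i, u i • fderiv ℝ h (t • u, v) (Pi.single i 1, 0) := by
    have hu : ((u, 0) : (ι → ℝ) × Y) = ∑ i, u i • ((Pi.single i 1, 0) : (ι → ℝ) × Y) := by
      ext j
      · simp [Prod.fst_sum, Finset.sum_apply, Pi.single_apply]
      · simp [Prod.snd_sum]
    simp_rw [hu, map_sum, map_smul]
  calc h (u, v) = h (0, v) + ∫ t in (0 : ℝ)..1, fderiv ℝ h (t • u, v) (u, 0) := by
        rw [integral_eq_sub_of_hasDerivAt (fun t _ => hderiv t)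
          ((hcont.clm_apply continuous_const).intervalIntegrable 0 1)]
        simp
    _ = h (0, v) + ∑ i, u i • hadamardQuotient h i (u, v) := by
        simp_rw [hsplit, hadamardQuotient, ← intervalIntegral.integral_smul]
        rw [intervalIntegral.integral_finsetSum
          (f := fun i t => u i • fderiv ℝ h (t • u, v) (Pi.single i 1, 0)) fun i _ =>
          ((hcont.clm_apply continuous_const).const_smul (u i)).intervalIntegrable 0 1]

theorem contDiff_hadamardQuotient [Fintype ι] [FiniteDimensional ℝ Y] {n : ℕ}
    {h : (ι → ℝ) × Y → G} (hh : ContDiff ℝ (n + 1) h) (i : ι) :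
    ContDiff ℝ n (hadamardQuotient h i) :=
  contDiff_intervalIntegral_of_contDiff
    (g := fun q : ℝ × ((ι → ℝ) × Y) => fderiv ℝ h (q.1 • q.2.1, q.2.2) (Pi.single i 1, 0))
    (((hh.fderiv_right le_rfl).comp (by fun_prop)).clm_apply contDiff_const) 0 1

end Hadamard

theorem ContDiffAt.exists_contDiff_eventuallyEq {E G : Type*} [NormedAddCommGroup E]
    [NormedSpace ℝ E] [FiniteDimensional ℝ E] [NormedAddCommGroup G] [NormedSpace ℝ G]
    {f : E → G} {x : E} {n : ℕ} (hf : ContDiffAt ℝ n f x) :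
    ∃ g : E → G, ContDiff ℝ n g ∧ g =ᶠ[𝓝 x] f := by
  obtain ⟨U, hU, hfU⟩ := hf.contDiffOn le_rfl (by simp)
  obtain ⟨ε, hε, hball⟩ := Metric.mem_nhds_iff.1 hU
  let φ : ContDiffBump x := ⟨ε / 4, ε / 2, by positivity, by linarith⟩
  refine ⟨fun y => φ y • f y, contDiff_iff_contDiffAt.2 fun y => ?_, ?_⟩
  · by_cases hy : y ∈ Metric.ball x ε
    · exact φ.contDiff.contDiffAt.smul
        ((hfU.mono hball).contDiffAt (Metric.isOpen_ball.mem_nhds hy))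
    · have hy' : y ∉ tsupport φ := by
        rw [φ.tsupport_eq]
        exact fun hy' => hy (Metric.closedBall_subset_ball (show ε / 2 < ε by linarith) hy')
      refine (contDiffAt_const (c := 0)).congr_of_eventuallyEq ?_
      filter_upwards [(isClosed_tsupport _).isOpen_compl.mem_nhds hy'] with z hz
      simp [image_eq_zero_of_notMem_tsupport hz]
  · filter_upwards [φ.eventuallyEq_one] with y hy
    simp [hy]

theorem ContDiffAt.exists_straightening {𝕜 E F : Type*} [RCLike 𝕜] [NormedAddCommGroup E]
    [NormedSpace 𝕜 E] [CompleteSpace E] [NormedAddCommGroup F] [NormedSpace 𝕜 F]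
    [FiniteDimensional 𝕜 F] {f : E → F} {a : E} {n : WithTop ℕ∞} (hf : ContDiffAt 𝕜 n f a)
    (hn : n ≠ 0) (hsurj : (fderiv 𝕜 f a).range = ⊤) :
    ∃ (P : E →L[𝕜] (fderiv 𝕜 f a).ker) (ψ : F × (fderiv 𝕜 f a).ker → E),
      ContDiffAt 𝕜 n ψ (f a, P a) ∧ ψ (f a, P a) = a ∧
      (∀ᶠ x in 𝓝 a, ψ (f x, P x) = x) ∧ ∀ᶠ p in 𝓝 (f a, P a), f (ψ p) = p.1 := by
  have := FiniteDimensional.complete 𝕜 F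
  obtain ⟨P, hP⟩ := (fderiv 𝕜 f a).ker_closedComplemented_of_finiteDimensional_range
  let φ : ImplicitFunctionData 𝕜 E F (fderiv 𝕜 f a).ker :=
    { leftFun := f
      leftDeriv := fderiv 𝕜 f a
      rightFun := P
      rightDeriv := P
      pt := a
      hasStrictFDerivAt_leftFun := hf.hasStrictFDerivAt hn
      hasStrictFDerivAt_rightFun := P.hasStrictFDerivAt
      range_leftDeriv := hsurj
      range_rightDeriv := LinearMap.range_eq_of_proj hP
      isCompl_ker := LinearMap.isCompl_of_proj hP }
  exact ⟨P, φ.implicitFunction.uncurry,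
    φ.contDiffAt_implicitFunction hf P.contDiff.contDiffAt hn,
    φ.implicitFunction_apply_image.self_of_nhds, φ.implicitFunction_apply_image,
    φ.leftFun_implicitFunction⟩

-- `E : Type` because the Hadamard quotients are `ℝ`-valued, see the universe constraint above.
theorem exists_eq_sum_mul_of_eventually_eq_zero {ι E : Type} [Fintype ι] [DecidableEq ι]
    [NormedAddCommGroup E] [NormedSpace ℝ E] [FiniteDimensional ℝ E] {n : ℕ} {f : E → ι → ℝ}
    {F : E → ℝ} {a : E} (hf : ContDiff ℝ (n + 1) f) (hF : ContDiff ℝ (n + 1) F)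
    (hsurj : (fderiv ℝ f a).range = ⊤) (hfa : f a = 0)
    (hvanish : ∀ᶠ x in 𝓝 a, f x = 0 → F x = 0) :
    ∃ G : ι → E → ℝ, (∀ i, ContDiff ℝ n (G i)) ∧ (∀ᶠ x in 𝓝 a, F x = ∑ i, f x i * G i x) ∧
      (fderiv ℝ F a = 0 → ∀ i, G i a = 0) := by
  have := FiniteDimensional.complete ℝ E
  obtain ⟨P, ψ, hψ, hψa, hψf, hfψ⟩ := hf.contDiffAt.exists_straightening (by simp) hsurj
  rw [hfa] at hψ hψa hfψ
  -- Hadamard's formula integrates along whole segments, so `F ∘ ψ` is first replaced by a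
  -- globally smooth function agreeing with it near the base point.
  obtain ⟨h, hh, hhψ⟩ :=
    (hF.contDiffAt.comp _ hψ : ContDiffAt ℝ (n + 1 : ℕ) (F ∘ ψ) _).exists_contDiff_eventuallyEq
  push_cast at hh
  have hh_zero : ∀ᶠ p in 𝓝 (0, P a), p.1 = 0 → h p = 0 := by
    have hψN : ∀ᶠ p in 𝓝 (0, P a), ψ p ∈ {x | f x = 0 → F x = 0} :=
      hψ.continuousAt.preimage_mem_nhds (by rwa [hψa])
    filter_upwards [hhψ, hfψ, hψN] with p hhp hfp hNp hp
    exact hhp.trans (hNp (hfp.trans hp))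
  let Φ : E → (ι → ℝ) × (fderiv ℝ f a).ker := fun x => (f x, P x)
  have hΦ : ContDiff ℝ (n + 1) Φ := hf.prodMk P.contDiff
  have hΦa : Tendsto Φ (𝓝 a) (𝓝 (0, P a)) := by
    simpa [Φ, hfa] using hΦ.continuous.tendsto a
  have hPa : Tendsto (fun x => ((0 : ι → ℝ), P x)) (𝓝 a) (𝓝 (0, P a)) :=
    (continuous_const.prodMk P.continuous).tendsto a
  refine ⟨fun i x => hadamardQuotient h i (Φ x),
    fun i => (contDiff_hadamardQuotient hh i).comp (hΦ.of_le le_self_add), ?_, ?_⟩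
  · filter_upwards [hψf, hΦa.eventually hhψ, hPa.eventually hh_zero] with x hxψ hxh hx0
    rw [show F x = h (Φ x) by rw [hxh, Function.comp_apply, hxψ],
      eq_add_sum_smul_hadamardQuotient (hh.of_le (by simp)), hx0 rfl]
    simp [Φ]
  · intro hdF i
    have hdh : fderiv ℝ h (0, P a) = 0 := by
      rw [hhψ.fderiv_eq, fderiv_comp _ (by rw [hψa]; exact hF.differentiable (by simp) a)
        (hψ.differentiableAt (by simp)), hψa, hdF, ContinuousLinearMap.zero_comp]
    show hadamardQuotient h i (f a, P a) = 0
    rw [hfa, hadamardQuotient_zero_fst, hdh, zero_apply]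

theorem statement0_general
    (m l k : ℕ) (hk : 1 ≤ k)
    (F : (Fin m → ℝ) → ℝ) (c : Fin l → (Fin m → ℝ) → ℝ)
    (hF : ContDiff ℝ k F) (hc : ∀ i, ContDiff ℝ k (c i))
    (hc0 : ∀ i, c i 0 = 0)
    (N : Set (Fin m → ℝ)) (hN : N ∈ 𝓝 (0 : Fin m → ℝ))
    (hvanish : ∀ x ∈ N, (∀ i, c i x = 0) → F x = 0)
    (hrank : LinearIndependent ℝ (fun i : Fin l => fderiv ℝ (c i) 0)) :
    ∃ Nstar ∈ 𝓝 (0 : Fin m → ℝ), Nstar ⊆ N ∧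
      ∃ G : Fin l → (Fin m → ℝ) → ℝ,
        (∀ i, ContDiffOn ℝ (k - 1) (G i) Nstar) ∧
        (∀ x ∈ Nstar, F x = ∑ i, c i x * G i x) ∧
        (fderiv ℝ F 0 = 0 → ∀ i, G i 0 = 0) := by
  obtain ⟨j, rfl⟩ : ∃ j, k = j + 1 := ⟨k - 1, by omega⟩
  have hsurj : (fderiv ℝ (fun x i => c i x) 0).range = ⊤ := by
    rw [fderiv_pi fun i => ((hc i).differentiable (by simp)).differentiableAt]
    exact ContinuousLinearMap.range_pi_eq_top_of_linearIndependent hrank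
  obtain ⟨G, hG, hFG, hG0⟩ := exists_eq_sum_mul_of_eventually_eq_zero
    (contDiff_pi.2 (by exact_mod_cast hc)) (by exact_mod_cast hF) hsurj (funext hc0)
    (by filter_upwards [hN] with x hxN hx0 using hvanish x hxN (congrFun hx0))
  refine ⟨N ∩ {x | F x = ∑ i, c i x * G i x}, inter_mem hN hFG, inter_subset_left, G,
    fun i => ?_, fun x hx => hx.2, hG0⟩
  rw [show ((j + 1 : ℕ) : WithTop ℕ∞) - 1 = j by norm_cast]
  exact (hG i).contDiffOn

/-- decomposition of functions vanishing on a common zero set.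
If `F` and `c₁, …, c_l` are `C^k` (`k ≥ 1`) real functions on `ℝ^m` vanishing at `0`,
`F` vanishes on the common zero set of the `cᵢ` in a neighborhood `N` of `0`, and the
Jacobian of `(c₁, …, c_l)` at `0` has full rank `l`, then on a smaller neighborhood
`N* ⊆ N` one can write `F = Σᵢ cᵢ Fᵢ` with `Fᵢ` of class `C^{k−1}`; moreover if
`∇F(0) = 0` then all `Fᵢ(0) = 0`. -/
theorem statement0
    (m l k : ℕ) (hlm : l ≤ m) (hk : 1 ≤ k)
    (F : (Fin m → ℝ) → ℝ) (c : Fin l → (Fin m → ℝ) → ℝ)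
    (hF : ContDiff ℝ k F) (hc : ∀ i, ContDiff ℝ k (c i))
    (hF0 : F 0 = 0) (hc0 : ∀ i, c i 0 = 0)
    (N : Set (Fin m → ℝ)) (hN : N ∈ 𝓝 (0 : Fin m → ℝ))
    (hvanish : ∀ x ∈ N, (∀ i, c i x = 0) → F x = 0)
    (hrank : LinearIndependent ℝ (fun i : Fin l => fderiv ℝ (c i) 0)) :
    ∃ Nstar ∈ 𝓝 (0 : Fin m → ℝ), Nstar ⊆ N ∧
      ∃ G : Fin l → (Fin m → ℝ) → ℝ,
        (∀ i, ContDiffOn ℝ (k - 1) (G i) Nstar) ∧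
        (∀ x ∈ Nstar, F x = ∑ i, c i x * G i x) ∧
        (fderiv ℝ F 0 = 0 → ∀ i, G i 0 = 0) :=
  statement0_general m l k hk F c hF hc hc0 N hN hvanish hrank
end
end

section
/- Assume (H0) and let σ⁺, τ⁺, σ⁻, τ⁻ be the transition maps to the section Π ⊂ {y = c}. Then for each i = 1,…,m the partial derivatives with respect to the parameter satisfy σ⁺_{αᵢ}(−a,0;0) = −κᵢ⁺/g⁺(b,c;0) and σ⁻_{αᵢ}(a,0;0) = −κᵢ⁻/g⁺(b,c;0). -/
open scoped Topology BigOperators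
open Set Asymptotics MeasureTheory intervalIntegral

noncomputable section

/-!
Fix `i`, put `e = Pi.single i 1` and `Φ (p, s) = Z⁺(p; s • e)`. A solution `X_s` of the
perturbed field that starts at `γ₀⁺(0)` stays `O(s)`-close to `γ₀⁺` (Grönwall's inequality plus a
bootstrap), so the second-order Taylor remainder of `Φ` along it is `O(s²)`. Consequently the
wedge `Δ_s = Z(γ₀⁺) ∧ (X_s - γ₀⁺)` solves `Δ' = div Z · Δ + s (Z ∧ ∂_{αᵢ}Z) + O(s²)`, and variation of
constants gives `Δ_s(T) = s κ(T) + O(s²)`, where `κ(τ₀⁺) = κᵢ⁺`. At the hitting time `T = τ⁺` the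
solution sits at `(σ⁺, c)`, and differentiating `Δ_s(τ⁺)` at `s = 0` gives
`-g⁺(b,c;0) σ⁺_{αᵢ} = κᵢ⁺`. The backward map `σ⁻` is the forward map of the time-reversed field
`-Z⁺`, which turns `κ` into `-κᵢ⁻`.
-/

open Filter

theorem gronwallBound_zero_le {K ε τ x : ℝ} (hK : 0 ≤ K) (hε : 0 ≤ ε) (hx : x ∈ Icc 0 τ) :
    gronwallBound 0 K ε x ≤ ε * (τ * Real.exp (K * τ)) := by
  rcases hK.eq_or_lt with rfl | hK
  · simp only [gronwallBound_K0, zero_mul, Real.exp_zero, mul_one]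
    nlinarith [hx.2]
  · simp only [gronwallBound_of_K_ne_0 hK.ne', zero_mul, zero_add]
    have hexp : Real.exp (K * x) ≤ Real.exp (K * τ) := Real.exp_le_exp.2 (by nlinarith [hx.2])
    have hx' : Real.exp (K * x) - 1 ≤ K * x * Real.exp (K * x) := by
      have h := mul_le_mul_of_nonneg_right (Real.add_one_le_exp (-(K * x)))
        (Real.exp_pos (K * x)).le
      rw [← Real.exp_add, neg_add_cancel, Real.exp_zero] at h
      linarith
    calc ε / K * (Real.exp (K * x) - 1) ≤ ε / K * (K * x * Real.exp (K * x)) := by gcongr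
      _ = ε * (x * Real.exp (K * x)) := by field_simp
      _ ≤ ε * (τ * Real.exp (K * τ)) := by
          gcongr
          · linarith [hx.1, hx.2]
          · exact hx.2

theorem Convex.norm_sub_sub_fderiv_le_mul_sq {E F : Type*} [NormedAddCommGroup E]
    [NormedSpace ℝ E] [NormedAddCommGroup F] [NormedSpace ℝ F] {Φ : E → F}
    (hΦ : ContDiff ℝ 2 Φ) {U : Set E} (hU : Convex ℝ U) {M : ℝ}
    (hM : ∀ z ∈ U, ‖fderiv ℝ (fderiv ℝ Φ) z‖ ≤ M) {z₀ z : E} (hz₀ : z₀ ∈ U) (hz : z ∈ U) :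
    ‖Φ z - Φ z₀ - fderiv ℝ Φ z₀ (z - z₀)‖ ≤ M * ‖z - z₀‖ ^ 2 := by
  have hD : Differentiable ℝ (fderiv ℝ Φ) :=
    (hΦ.fderiv_right (m := 1) (by norm_num)).differentiable one_ne_zero
  set V := U ∩ Metric.closedBall z₀ ‖z - z₀‖
  have hG : ∀ w ∈ V, HasFDerivAt (fun w => Φ w - fderiv ℝ Φ z₀ w)
      (fderiv ℝ Φ w - fderiv ℝ Φ z₀) w := fun w _ =>
    ((hΦ.differentiable (by norm_num)) w).hasFDerivAt.sub (fderiv ℝ Φ z₀).hasFDerivAt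
  have hGbound : ∀ w ∈ V, ‖fderiv ℝ (fun w => Φ w - fderiv ℝ Φ z₀ w) w‖ ≤ M * ‖z - z₀‖ := by
    intro w hw
    rw [(hG w hw).fderiv]
    calc ‖fderiv ℝ Φ w - fderiv ℝ Φ z₀‖ ≤ M * ‖w - z₀‖ :=
          hU.norm_image_sub_le_of_norm_fderiv_le (fun w _ => hD w) hM hz₀ hw.1
      _ ≤ M * ‖z - z₀‖ := by
          gcongr
          · exact (norm_nonneg (fderiv ℝ (fderiv ℝ Φ) z₀)).trans (hM z₀ hz₀)
          · simpa [dist_eq_norm] using hw.2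
  have key := (hU.inter (convex_closedBall _ _)).norm_image_sub_le_of_norm_fderiv_le
    (fun w hw => (hG w hw).differentiableAt) hGbound
    ⟨hz₀, Metric.mem_closedBall_self (norm_nonneg _)⟩ ⟨hz, by simp [dist_eq_norm]⟩
  calc ‖Φ z - Φ z₀ - fderiv ℝ Φ z₀ (z - z₀)‖
      = ‖Φ z - fderiv ℝ Φ z₀ z - (Φ z₀ - fderiv ℝ Φ z₀ z₀)‖ := by rw [map_sub]; congr 1; abel
    _ ≤ M * ‖z - z₀‖ * ‖z - z₀‖ := key
    _ = M * ‖z - z₀‖ ^ 2 := by ring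

theorem ContinuousOn.forall_le_of_bootstrap {d : ℝ → ℝ} {T r : ℝ}
    (hd : ContinuousOn d (Icc 0 T)) (h0 : d 0 < r)
    (hstep : ∀ u ∈ Icc 0 T, (∀ t ∈ Icc 0 u, d t ≤ r) → d u < r) :
    ∀ t ∈ Icc 0 T, d t ≤ r := by
  by_contra! hbad
  obtain ⟨t₁, ht₁, hrt₁⟩ := hbad
  set S := Icc 0 T ∩ d ⁻¹' Ici r
  have hS : IsCompact S :=
    isCompact_Icc.of_isClosed_subset (hd.preimage_isClosed_of_isClosed isClosed_Icc isClosed_Ici)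
      inter_subset_left
  obtain ⟨⟨hu0, huT⟩, hru⟩ := hS.sInf_mem ⟨t₁, ht₁, hrt₁.le⟩
  set u := sInf S
  have hbelow : ∀ t ∈ Icc 0 T, t < u → d t < r := fun t ht htu =>
    not_le.1 fun h => (csInf_le hS.bddBelow ⟨ht, h⟩).not_gt htu
  have hle : ∀ t ∈ Icc 0 u, d t ≤ r := by
    intro t ht
    rcases ht.2.lt_or_eq with htu | rfl
    · exact (hbelow t ⟨ht.1, ht.2.trans huT⟩ htu).le
    · obtain ⟨c, hc, hdc⟩ := intermediate_value_Icc hu0 (hd.mono (Icc_subset_Icc_right huT))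
        ⟨h0.le, hru⟩
      rcases hc.2.lt_or_eq with hcu | rfl
      · exact absurd hdc (hbelow c ⟨hc.1, hc.2.trans huT⟩ hcu).ne
      · exact hdc.le
  exact (hstep u ⟨hu0, huT⟩ hle).not_ge hru

theorem hasDerivAt_of_abs_sub_mul_le_sq {h k : ℝ → ℝ} {C : ℝ} (hk : ContinuousAt k 0)
    (hb : ∀ᶠ s in 𝓝 0, |h s - s * k s| ≤ C * s ^ 2) : HasDerivAt h (k 0) 0 := by
  have h0 : h 0 = 0 := by simpa using hb.self_of_nhds
  have hsq : (fun s : ℝ => h s - s * k s) =o[𝓝 0] fun s => s := by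
    refine IsBigO.trans_isLittleO (g := fun s : ℝ => s ^ 2) ?_ ?_
    · refine IsBigO.of_bound C (hb.mono fun s hs => ?_)
      simpa [abs_of_nonneg (sq_nonneg s)] using hs
    · simpa using isLittleO_pow_id (𝕜 := ℝ) one_lt_two
  have hlin : (fun s : ℝ => s * (k s - k 0)) =o[𝓝 0] fun s => s := by
    simpa using (isBigO_refl (fun s : ℝ => s) (𝓝 0)).mul_isLittleO
      ((isLittleO_one_iff ℝ).2 (tendsto_sub_nhds_zero_iff.2 hk.tendsto))
  rw [hasDerivAt_iff_isLittleO, h0]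
  simpa [sub_eq_add_neg, mul_add, add_assoc, mul_comm] using hsq.add hlin

theorem HasDerivAt.fst {u : ℝ → ℝ × ℝ} {u' : ℝ × ℝ} {t : ℝ} (hu : HasDerivAt u u' t) :
    HasDerivAt (fun t => (u t).1) u'.1 t :=
  (ContinuousLinearMap.fst ℝ ℝ ℝ).hasFDerivAt.comp_hasDerivAt t hu

theorem HasDerivAt.snd {u : ℝ → ℝ × ℝ} {u' : ℝ × ℝ} {t : ℝ} (hu : HasDerivAt u u' t) :
    HasDerivAt (fun t => (u t).2) u'.2 t :=
  (ContinuousLinearMap.snd ℝ ℝ ℝ).hasFDerivAt.comp_hasDerivAt t hu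

theorem hasDerivAt_comp_smul_single {F : Type*} [NormedAddCommGroup F] [NormedSpace ℝ F] {m : ℕ}
    {φ : (Fin m → ℝ) → F} (hφ : DifferentiableAt ℝ φ 0) (i : Fin m) :
    HasDerivAt (fun s : ℝ => φ (s • Pi.single i 1)) (fderiv ℝ φ 0 (Pi.single i 1)) 0 := by
  have hline : HasDerivAt (fun s : ℝ => s • (Pi.single i 1 : Fin m → ℝ)) (Pi.single i 1) 0 := by
    simpa using (hasDerivAt_id (0:ℝ)).smul_const (Pi.single i (1:ℝ) : Fin m → ℝ)
  have hF : HasFDerivAt φ (fderiv ℝ φ 0) ((fun s : ℝ => s • (Pi.single i 1 : Fin m → ℝ)) 0) := by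
    simpa using hφ.hasFDerivAt
  exact hF.comp_hasDerivAt 0 hline

theorem ContinuousOn.exists_continuous_eqOn_Icc {β : Type*} [TopologicalSpace β] {φ : ℝ → β}
    {a b : ℝ} (hab : a ≤ b) (hφ : ContinuousOn φ (Icc a b)) :
    ∃ ψ : ℝ → β, Continuous ψ ∧ EqOn ψ φ (Icc a b) :=
  ⟨fun t => φ (projIcc a b hab t),
    hφ.comp_continuous continuous_projIcc.subtype_val fun t => (projIcc a b hab t).2,
    fun t ht => by simp [projIcc_of_mem hab ht]⟩

def wedge (u v : ℝ × ℝ) : ℝ := u.1 * v.2 - u.2 * v.1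

theorem abs_wedge_le (u v : ℝ × ℝ) : |wedge u v| ≤ 2 * ‖u‖ * ‖v‖ := by
  have h1 : |u.1| ≤ ‖u‖ := norm_fst_le u
  have h2 : |u.2| ≤ ‖u‖ := norm_snd_le u
  have h3 : |v.1| ≤ ‖v‖ := norm_fst_le v
  have h4 : |v.2| ≤ ‖v‖ := norm_snd_le v
  calc |wedge u v| ≤ |u.1| * |v.2| + |u.2| * |v.1| := by
        rw [wedge, ← abs_mul, ← abs_mul]; exact abs_sub _ _
    _ ≤ ‖u‖ * ‖v‖ + ‖u‖ * ‖v‖ := by gcongr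
    _ = 2 * ‖u‖ * ‖v‖ := by ring

theorem HasDerivAt.wedge {u v : ℝ → ℝ × ℝ} {u' v' : ℝ × ℝ} {t : ℝ}
    (hu : HasDerivAt u u' t) (hv : HasDerivAt v v' t) :
    HasDerivAt (fun t => wedge (u t) (v t)) (wedge u' (v t) + wedge (u t) v') t := by
  refine ((hu.fst.mul hv.snd).sub (hu.snd.mul hv.fst)).congr_deriv ?_
  unfold _root_.wedge; ring

def melnikovIntegral (d m : ℝ → ℝ) (T : ℝ) : ℝ :=
  ∫ t in (0:ℝ)..T, Real.exp (∫ u in t..T, d u) * m t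

theorem melnikovIntegral_eq {d : ℝ → ℝ} (hd : Continuous d) (m : ℝ → ℝ) (T : ℝ) :
    melnikovIntegral d m T =
      Real.exp (∫ u in (0:ℝ)..T, d u) *
        ∫ t in (0:ℝ)..T, Real.exp (-∫ u in (0:ℝ)..t, d u) * m t := by
  rw [melnikovIntegral, ← intervalIntegral.integral_const_mul]
  refine intervalIntegral.integral_congr fun t _ => ?_
  rw [← intervalIntegral.integral_interval_sub_left (hd.intervalIntegrable 0 T)
    (hd.intervalIntegrable 0 t), sub_eq_add_neg, Real.exp_add, mul_assoc]

theorem continuous_melnikovIntegral {d m : ℝ → ℝ} (hd : Continuous d) (hm : Continuous m) :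
    Continuous (melnikovIntegral d m) := by
  have hI : Continuous fun t => ∫ u in (0:ℝ)..t, d u :=
    intervalIntegral.continuous_primitive (fun a b => hd.intervalIntegrable a b) 0
  have hW : Continuous fun t => ∫ u in (0:ℝ)..t, Real.exp (-∫ v in (0:ℝ)..u, d v) * m u :=
    intervalIntegral.continuous_primitive
      (fun a b => ((Real.continuous_exp.comp hI.neg).mul hm).intervalIntegrable a b) 0
  rw [funext (melnikovIntegral_eq hd m)]
  exact (Real.continuous_exp.comp hI).mul hW

theorem melnikovIntegral_congr {d d' m m' : ℝ → ℝ} {T : ℝ} (hT : 0 ≤ T)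
    (hd : EqOn d d' (Icc 0 T)) (hm : EqOn m m' (Icc 0 T)) :
    melnikovIntegral d m T = melnikovIntegral d' m' T := by
  refine intervalIntegral.integral_congr fun t ht => ?_
  rw [uIcc_of_le hT] at ht
  have hsub : uIcc t T ⊆ Icc 0 T := by rw [uIcc_of_le ht.2]; exact Icc_subset_Icc_left ht.1
  rw [intervalIntegral.integral_congr fun u hu => hd (hsub hu), hm ht]

theorem melnikovIntegral_comp_neg (d m : ℝ → ℝ) (B : ℝ) :
    melnikovIntegral (fun t => -d (-t)) (fun t => m (-t)) B = -melnikovIntegral d m (-B) := by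
  have hin : ∀ t, ∫ u in t..B, -d (-u) = ∫ u in -t..-B, d u := fun t => by
    rw [intervalIntegral.integral_neg, intervalIntegral.integral_comp_neg (fun u => d u),
      intervalIntegral.integral_symm, neg_neg]
  simp only [melnikovIntegral, hin]
  rw [intervalIntegral.integral_comp_neg (fun t => Real.exp (∫ u in t..-B, d u) * m t), neg_zero,
    intervalIntegral.integral_symm]

theorem abs_sub_mul_melnikovIntegral_le {d m ρ Δ : ℝ → ℝ} {s T D ε : ℝ}
    (hd : Continuous d) (hm : Continuous m) (hT : 0 ≤ T)
    (hdD : ∀ t ∈ Icc 0 T, |d t| ≤ D) (hρ : ∀ t ∈ Icc 0 T, |ρ t| ≤ ε) (hΔ0 : Δ 0 = 0)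
    (hΔ : ∀ t ∈ Icc 0 T, HasDerivAt Δ (d t * Δ t + s * m t + ρ t) t) :
    |Δ T - s * melnikovIntegral d m T| ≤ Real.exp (2 * D * T) * (ε * T) := by
  set I : ℝ → ℝ := fun t => ∫ u in (0:ℝ)..t, d u
  set W : ℝ → ℝ := fun t => ∫ u in (0:ℝ)..t, Real.exp (-I u) * m u
  have hIc : Continuous I :=
    intervalIntegral.continuous_primitive (fun a b => hd.intervalIntegrable a b) 0
  have hI : ∀ t ∈ Icc 0 T, |I t| ≤ D * T := by
    intro t ht
    have := intervalIntegral.norm_integral_le_of_norm_le_const (a := 0) (b := t) (f := d)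
      (C := D) fun u hu => by
        rw [uIoc_of_le ht.1] at hu
        exact hdD u ⟨hu.1.le, hu.2.trans ht.2⟩
    rw [Real.norm_eq_abs, sub_zero, abs_of_nonneg ht.1] at this
    refine this.trans ?_
    have hD : 0 ≤ D := (abs_nonneg _).trans (hdD t ht)
    exact mul_le_mul_of_nonneg_left ht.2 hD
  -- variation of constants: `J' = e^{-I} ρ`
  set J : ℝ → ℝ := fun t => Real.exp (-I t) * Δ t - s * W t
  have hJ : ∀ t ∈ Icc 0 T, HasDerivWithinAt J (Real.exp (-I t) * ρ t) (Icc 0 T) t := by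
    intro t ht
    have hI' : HasDerivAt I (d t) t := (hd.integral_hasStrictDerivAt 0 t).hasDerivAt
    have hW' : HasDerivAt W (Real.exp (-I t) * m t) t :=
      (((Real.continuous_exp.comp hIc.neg).mul hm).integral_hasStrictDerivAt 0 t).hasDerivAt
    refine (((hI'.neg.exp).mul (hΔ t ht)).sub (hW'.const_mul s)).hasDerivWithinAt.congr_deriv ?_
    simp only [Pi.neg_apply]
    ring
  have hJbound : ∀ t ∈ Ico 0 T, ‖Real.exp (-I t) * ρ t‖ ≤ Real.exp (D * T) * ε := by
    intro t ht
    rw [Real.norm_eq_abs, abs_mul, Real.abs_exp]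
    exact mul_le_mul (Real.exp_le_exp.2 ((neg_le_abs _).trans (hI t (Ico_subset_Icc_self ht))))
      (hρ t (Ico_subset_Icc_self ht)) (abs_nonneg _) (Real.exp_pos _).le
  have hJT := norm_image_sub_le_of_norm_deriv_le_segment' hJ hJbound T ⟨hT, le_rfl⟩
  have hJ0 : J 0 = 0 := by simp [J, W, hΔ0]
  have hsplit : Δ T - s * melnikovIntegral d m T = Real.exp (I T) * J T := by
    rw [melnikovIntegral_eq hd]
    simp only [J, W, I, mul_sub, ← mul_assoc, ← Real.exp_add, add_neg_cancel, Real.exp_zero,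
      one_mul]
    ring
  rw [hsplit, abs_mul, Real.abs_exp, two_mul, add_mul, Real.exp_add, mul_assoc]
  rw [hJ0, sub_zero, sub_zero, Real.norm_eq_abs] at hJT
  exact mul_le_mul (Real.exp_le_exp.2 ((le_abs_self _).trans (hI T ⟨hT, le_rfl⟩)))
    (hJT.trans_eq (by ring)) (abs_nonneg _) (Real.exp_pos _).le

section Perturbation

variable {E : Type*} [NormedAddCommGroup E] {Φ : E × ℝ → E} {γ : ℝ → E} {τ : ℝ}

theorem exists_bound_on_closedBall_curve [ProperSpace E] {F : Type*} [NormedAddCommGroup F]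
    {h : E × ℝ → F} (hh : Continuous h) (hγ : ContinuousOn γ (Icc 0 τ)) :
    ∃ M, 0 ≤ M ∧ ∀ t ∈ Icc 0 τ, ∀ z ∈ Metric.closedBall (γ t, (0:ℝ)) 1, ‖h z‖ ≤ M := by
  have hK : IsCompact (Metric.cthickening 1 ((fun t => (γ t, (0:ℝ))) '' Icc 0 τ)) :=
    (isCompact_Icc.image_of_continuousOn (hγ.prodMk continuousOn_const)).cthickening
  obtain ⟨M, hM⟩ := hK.exists_bound_of_continuousOn hh.continuousOn
  exact ⟨max M 0, le_max_right _ _, fun t ht z hz =>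
    (hM z (Metric.closedBall_subset_cthickening (mem_image_of_mem _ ht) 1 hz)).trans
      (le_max_left _ _)⟩

theorem norm_sub_le_of_lipschitz_of_mem_closedBall [NormedSpace ℝ E] {M : ℝ} (hM : 0 ≤ M)
    (hLip : ∀ t ∈ Icc 0 τ, ∀ z ∈ Metric.closedBall (γ t, (0:ℝ)) 1,
      ∀ z' ∈ Metric.closedBall (γ t, (0:ℝ)) 1, ‖Φ z - Φ z'‖ ≤ M * ‖z - z'‖)
    (hγ : ∀ t ∈ Icc 0 τ, HasDerivAt γ (Φ (γ t, 0)) t) {s T : ℝ} (hs : |s| ≤ 1) (hT : T ≤ τ)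
    {X : ℝ → E} (hX : ∀ t ∈ Icc 0 T, HasDerivAt X (Φ (X t, s)) t) (hX0 : X 0 = γ 0)
    (hnear : ∀ t ∈ Icc 0 T, ‖X t - γ t‖ ≤ 1) :
    ∀ t ∈ Icc 0 T, ‖X t - γ t‖ ≤ M * (τ * Real.exp (M * τ)) * |s| := by
  have hTτ : Icc 0 T ⊆ Icc 0 τ := Icc_subset_Icc_right hT
  have hball {t p} (ht : t ∈ Icc 0 τ) (hp : p ∈ Metric.closedBall (γ t) 1) :
      ((p, s) : E × ℝ) ∈ Metric.closedBall (γ t, (0:ℝ)) 1 := by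
    rw [← closedBall_prod_same]
    exact ⟨hp, by simpa using hs⟩
  intro t ht
  rw [← dist_eq_norm]
  refine (dist_le_of_approx_trajectories_ODE_of_mem (v := fun _ p => Φ (p, s))
    (s := fun t => Metric.closedBall (γ t) 1) (K := M.toNNReal) (εf := 0) (εg := M * |s|) (δ := 0)
    (fun t ht => LipschitzOnWith.of_dist_le_mul fun p hp p' hp' => ?_)
    (fun t ht => (hX t ht).continuousAt.continuousWithinAt)
    (fun t ht => (hX t (Ico_subset_Icc_self ht)).hasDerivWithinAt) (fun _ _ => by simp)
    (fun t ht => by simpa [dist_eq_norm] using hnear t (Ico_subset_Icc_self ht))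
    (fun t ht => (hγ t (hTτ ht)).continuousAt.continuousWithinAt)
    (fun t ht => (hγ t (hTτ (Ico_subset_Icc_self ht))).hasDerivWithinAt) (fun t ht => ?_)
    (fun t _ => Metric.mem_closedBall_self zero_le_one) (by simp [hX0]) t ht).trans ?_
  · have ht' := hTτ (Ico_subset_Icc_self ht)
    simpa [dist_eq_norm, Prod.norm_def, Real.coe_toNNReal M hM] using
      hLip t ht' _ (hball ht' hp) _ (hball ht' hp')
  · have ht' := hTτ (Ico_subset_Icc_self ht)
    have h := hLip t ht' (γ t, 0) (Metric.mem_closedBall_self zero_le_one) (γ t, s)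
      (hball ht' (Metric.mem_closedBall_self zero_le_one))
    simpa [dist_eq_norm, Prod.norm_def] using h
  · rw [zero_add, sub_zero, Real.coe_toNNReal M hM]
    simpa [mul_comm, mul_left_comm, mul_assoc] using
      gronwallBound_zero_le hM (mul_nonneg hM (abs_nonneg s)) (hTτ ht)


theorem exists_norm_sub_le_mul_abs [NormedSpace ℝ E] [ProperSpace E] (hΦ : ContDiff ℝ 1 Φ)
    (hγ : ∀ t ∈ Icc 0 τ, HasDerivAt γ (Φ (γ t, 0)) t) :
    ∃ B, ∀ᶠ s in 𝓝 (0:ℝ), ∀ T ≤ τ, ∀ X : ℝ → E,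
      (∀ t ∈ Icc 0 T, HasDerivAt X (Φ (X t, s)) t) → X 0 = γ 0 →
        ∀ t ∈ Icc 0 T, ‖X t - γ t‖ ≤ B * |s| := by
  have hγc : ContinuousOn γ (Icc 0 τ) :=
    continuousOn_of_forall_continuousAt fun t ht => (hγ t ht).continuousAt
  obtain ⟨M, hM, hMbound⟩ :=
    exists_bound_on_closedBall_curve (hΦ.continuous_fderiv one_ne_zero) hγc
  have hLip : ∀ t ∈ Icc 0 τ, ∀ z ∈ Metric.closedBall (γ t, (0:ℝ)) 1,
      ∀ z' ∈ Metric.closedBall (γ t, (0:ℝ)) 1, ‖Φ z - Φ z'‖ ≤ M * ‖z - z'‖ :=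
    fun t ht z hz z' hz' => (convex_closedBall _ _).norm_image_sub_le_of_norm_fderiv_le
      (fun w _ => hΦ.differentiable one_ne_zero w) (hMbound t ht) hz' hz
  set B := M * (τ * Real.exp (M * τ))
  have hsmall : ∀ᶠ s : ℝ in 𝓝 0, |s| ≤ 1 ∧ B * |s| < 1 :=
    ((continuous_abs.tendsto' 0 0 abs_zero).eventually (eventually_le_nhds zero_lt_one)).and
      (((by fun_prop : Continuous fun s : ℝ => B * |s|).tendsto' 0 0 (by simp)).eventually
        (eventually_lt_nhds one_pos))
  refine ⟨B, hsmall.mono fun s ⟨hs1, hsB⟩ T hT X hX hX0 => ?_⟩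
  have hXc : ContinuousOn (fun t => ‖X t - γ t‖) (Icc 0 T) := fun t ht =>
    ((hX t ht).continuousAt.sub
      (hγ t (Icc_subset_Icc_right hT ht)).continuousAt).norm.continuousWithinAt
  have hnear : ∀ t ∈ Icc 0 T, ‖X t - γ t‖ ≤ 1 :=
    hXc.forall_le_of_bootstrap (by simp [hX0]) fun u hu hle =>
      (norm_sub_le_of_lipschitz_of_mem_closedBall hM hLip hγ hs1 (hu.2.trans hT)
        (fun t ht => hX t ⟨ht.1, ht.2.trans hu.2⟩) hX0 hle u ⟨hu.1, le_rfl⟩).trans_lt hsB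
  exact norm_sub_le_of_lipschitz_of_mem_closedBall hM hLip hγ hs1 hT hX hX0 hnear

theorem exists_norm_sub_sub_fderiv_le_mul_sq [NormedSpace ℝ E] [ProperSpace E] (hΦ : ContDiff ℝ 2 Φ)
    (hγ : ∀ t ∈ Icc 0 τ, HasDerivAt γ (Φ (γ t, 0)) t) :
    ∃ C, ∀ᶠ s in 𝓝 (0:ℝ), ∀ T ≤ τ, ∀ X : ℝ → E,
      (∀ t ∈ Icc 0 T, HasDerivAt X (Φ (X t, s)) t) → X 0 = γ 0 → ∀ t ∈ Icc 0 T,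
        ‖Φ (X t, s) - Φ (γ t, 0) - fderiv ℝ Φ (γ t, 0) (X t - γ t, s)‖ ≤ C * s ^ 2 := by
  have hγc : ContinuousOn γ (Icc 0 τ) :=
    continuousOn_of_forall_continuousAt fun t ht => (hγ t ht).continuousAt
  obtain ⟨B, hB⟩ := exists_norm_sub_le_mul_abs (hΦ.of_le one_le_two) hγ
  obtain ⟨M, hM, hMbound⟩ := exists_bound_on_closedBall_curve
    ((hΦ.fderiv_right (m := 1) le_rfl).continuous_fderiv one_ne_zero) hγc
  set B' := max B 1
  have hsmall : ∀ᶠ s : ℝ in 𝓝 0, B' * |s| ≤ 1 :=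
    ((by fun_prop : Continuous fun s : ℝ => B' * |s|).tendsto' 0 0 (by simp)).eventually
      (eventually_le_nhds zero_lt_one)
  refine ⟨M * B' ^ 2, (hB.and hsmall).mono fun s ⟨hs, hsB⟩ T hT X hX hX0 t ht => ?_⟩
  have hdist : ‖((X t, s) : E × ℝ) - (γ t, 0)‖ ≤ B' * |s| := by
    rw [Prod.mk_sub_mk, sub_zero, Prod.norm_def, Real.norm_eq_abs]
    exact max_le ((hs T hT X hX hX0 t ht).trans (by gcongr; exact le_max_left _ _))
      (le_mul_of_one_le_left (abs_nonneg s) (le_max_right _ _))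
  have hTay := (convex_closedBall ((γ t, 0) : E × ℝ) 1).norm_sub_sub_fderiv_le_mul_sq hΦ
    (hMbound t (Icc_subset_Icc_right hT ht)) (Metric.mem_closedBall_self zero_le_one)
    (mem_closedBall_iff_norm.2 (hdist.trans hsB))
  rw [Prod.mk_sub_mk, sub_zero] at hTay hdist
  calc _ ≤ M * ‖((X t - γ t, s) : E × ℝ)‖ ^ 2 := hTay
    _ ≤ M * (B' * |s|) ^ 2 := by gcongr
    _ = M * B' ^ 2 * s ^ 2 := by rw [mul_pow, sq_abs]; ring

end Perturbation

theorem hasDerivAt_wedge_sub {Φ : (ℝ × ℝ) × ℝ → ℝ × ℝ} (hΦ : Differentiable ℝ Φ)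
    {γ X : ℝ → ℝ × ℝ} {s t : ℝ} (hγ : HasDerivAt γ (Φ (γ t, 0)) t)
    (hX : HasDerivAt X (Φ (X t, s)) t) :
    let A := fderiv ℝ Φ (γ t, 0)
    HasDerivAt (fun t => wedge (Φ (γ t, 0)) (X t - γ t))
      (((A ((1, 0), 0)).1 + (A ((0, 1), 0)).2) * wedge (Φ (γ t, 0)) (X t - γ t)
        + s * wedge (Φ (γ t, 0)) (A ((0, 0), 1))
        + wedge (Φ (γ t, 0)) (Φ (X t, s) - Φ (γ t, 0) - A (X t - γ t, s))) t := by
  intro A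
  have hF : HasDerivAt (fun t => Φ (γ t, 0)) (A (Φ (γ t, 0), 0)) t :=
    (hΦ _).hasFDerivAt.comp_hasDerivAt t (hγ.prodMk (hasDerivAt_const t 0))
  have hA : ∀ v : (ℝ × ℝ) × ℝ,
      A v = v.1.1 • A ((1, 0), 0) + v.1.2 • A ((0, 1), 0) + v.2 • A ((0, 0), 1) := fun v => by
    rw [← map_smul, ← map_smul, ← map_smul, ← map_add, ← map_add]
    congr 1; ext <;> simp
  refine (hF.wedge (hX.sub hγ)).congr_deriv ?_
  rw [hA (Φ (γ t, 0), 0), hA (X t - γ t, s)]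
  simp only [wedge, Pi.sub_apply, Prod.fst_add, Prod.snd_add, Prod.smul_fst, Prod.smul_snd,
    Prod.fst_sub, Prod.snd_sub, smul_eq_mul]
  ring

theorem hasDerivAt_wedge_sectionHit {Φ₀ : ℝ × ℝ → ℝ × ℝ} {γ : ℝ → ℝ × ℝ} {Tf Sf : ℝ → ℝ}
    {T₀ b c T' S' : ℝ} (hΦ₀ : DifferentiableAt ℝ Φ₀ (b, c)) (hγ : HasDerivAt γ (Φ₀ (b, c)) T₀)
    (hbc : γ T₀ = (b, c)) (hTf : HasDerivAt Tf T' 0) (hTf0 : Tf 0 = T₀) (hSf : HasDerivAt Sf S' 0)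
    (hSf0 : Sf 0 = b) :
    HasDerivAt (fun s => wedge (Φ₀ (γ (Tf s))) ((Sf s, c) - γ (Tf s))) (-(Φ₀ (b, c)).2 * S') 0 := by
  rw [← hTf0] at hγ hbc
  have hγT : HasDerivAt (fun s => γ (Tf s)) (T' • Φ₀ (b, c)) 0 := hγ.scomp 0 hTf
  rw [← hbc] at hΦ₀
  have hP := hΦ₀.hasFDerivAt.comp_hasDerivAt 0 hγT
  refine (hP.wedge ((hSf.prodMk (hasDerivAt_const 0 c)).sub hγT)).congr_deriv ?_
  simp only [Function.comp, Pi.sub_apply, hbc, hSf0, sub_self, wedge, Prod.fst_zero, Prod.snd_zero,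
    Prod.fst_sub, Prod.snd_sub, Prod.smul_fst, Prod.smul_snd, smul_eq_mul]
  ring

theorem exists_abs_wedge_sub_mul_melnikovIntegral_le {Φ : (ℝ × ℝ) × ℝ → ℝ × ℝ}
    (hΦ : ContDiff ℝ 2 Φ) {γ : ℝ → ℝ × ℝ} {τ : ℝ}
    (hγ : ∀ t ∈ Icc 0 τ, HasDerivAt γ (Φ (γ t, 0)) t) {d m : ℝ → ℝ} (hd : Continuous d)
    (hm : Continuous m)
    (hdγ : ∀ t ∈ Icc 0 τ,
      d t = (fderiv ℝ Φ (γ t, 0) ((1, 0), 0)).1 + (fderiv ℝ Φ (γ t, 0) ((0, 1), 0)).2)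
    (hmγ : ∀ t ∈ Icc 0 τ, m t = wedge (Φ (γ t, 0)) (fderiv ℝ Φ (γ t, 0) ((0, 0), 1))) :
    ∃ C, ∀ᶠ s in 𝓝 (0:ℝ), ∀ T ∈ Icc 0 τ, ∀ X : ℝ → ℝ × ℝ,
      (∀ t ∈ Icc 0 T, HasDerivAt X (Φ (X t, s)) t) → X 0 = γ 0 →
        |wedge (Φ (γ T, 0)) (X T - γ T) - s * melnikovIntegral d m T| ≤ C * s ^ 2 := by
  obtain ⟨C, hC⟩ := exists_norm_sub_sub_fderiv_le_mul_sq hΦ hγ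
  have hγc : ContinuousOn γ (Icc 0 τ) :=
    continuousOn_of_forall_continuousAt fun t ht => (hγ t ht).continuousAt
  obtain ⟨D, hD⟩ := (isCompact_Icc (a := 0) (b := τ)).exists_bound_of_continuousOn hd.continuousOn
  obtain ⟨M, hM⟩ := isCompact_Icc.exists_bound_of_continuousOn
    (hΦ.continuous.comp_continuousOn (hγc.prodMk (continuousOn_const (c := (0:ℝ)))))
  refine ⟨Real.exp (2 * D * τ) * (2 * M * C * τ), hC.mono fun s hs T hT X hX hX0 => ?_⟩
  have hTτ : Icc 0 T ⊆ Icc 0 τ := Icc_subset_Icc_right hT.2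
  have h0 : (0:ℝ) ∈ Icc 0 T := ⟨le_rfl, hT.1⟩
  have hD0 : 0 ≤ D := (norm_nonneg _).trans (hD 0 (hTτ h0))
  have hM0 : 0 ≤ M := (norm_nonneg _).trans (hM 0 (hTτ h0))
  have hCs : 0 ≤ C * s ^ 2 := (norm_nonneg _).trans (hs T hT.2 X hX hX0 0 h0)
  have key := abs_sub_mul_melnikovIntegral_le (s := s)
    (Δ := fun t => wedge (Φ (γ t, 0)) (X t - γ t)) (ε := 2 * M * (C * s ^ 2)) hd hm hT.1
    (fun t ht => hD t (hTτ ht))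
    (fun t ht => (abs_wedge_le _ _).trans (by
      gcongr
      · exact hM t (hTτ ht)
      · exact hs T hT.2 X hX hX0 t ht))
    (by simp [hX0, wedge])
    (fun t ht => by
      rw [hdγ t (hTτ ht), hmγ t (hTτ ht)]
      exact hasDerivAt_wedge_sub (hΦ.differentiable two_ne_zero) (hγ t (hTτ ht)) (hX t ht))
  calc _ ≤ Real.exp (2 * D * T) * (2 * M * (C * s ^ 2) * T) := key
    _ ≤ Real.exp (2 * D * τ) * (2 * M * (C * s ^ 2) * τ) := by
        have : 0 ≤ 2 * M * (C * s ^ 2) := by positivity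
        gcongr
        exacts [mul_nonneg this hT.1, hT.2, hT.2]
    _ = Real.exp (2 * D * τ) * (2 * M * C * τ) * s ^ 2 := by ring

theorem hasDerivAt_wedge_sectionHit_eq_melnikovIntegral {Φ : (ℝ × ℝ) × ℝ → ℝ × ℝ}
    (hΦ : ContDiff ℝ 2 Φ) {γ : ℝ → ℝ × ℝ} {τ T₀ : ℝ} (hT₀ : T₀ ∈ Ioo 0 τ)
    (hγ : ∀ t ∈ Icc 0 τ, HasDerivAt γ (Φ (γ t, 0)) t) {d m : ℝ → ℝ} (hd : Continuous d)
    (hm : Continuous m)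
    (hdγ : ∀ t ∈ Icc 0 τ,
      d t = (fderiv ℝ Φ (γ t, 0) ((1, 0), 0)).1 + (fderiv ℝ Φ (γ t, 0) ((0, 1), 0)).2)
    (hmγ : ∀ t ∈ Icc 0 τ, m t = wedge (Φ (γ t, 0)) (fderiv ℝ Φ (γ t, 0) ((0, 0), 1)))
    {c : ℝ} {Tf Sf : ℝ → ℝ} (hTf0 : Tf 0 = T₀) (hTf : ContinuousAt Tf 0)
    (hsol : ∀ᶠ s in 𝓝 (0:ℝ), ∃ X : ℝ → ℝ × ℝ,
      (∀ t ∈ Icc 0 (Tf s), HasDerivAt X (Φ (X t, s)) t) ∧ X 0 = γ 0 ∧ X (Tf s) = (Sf s, c)) :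
    HasDerivAt (fun s => wedge (Φ (γ (Tf s), 0)) ((Sf s, c) - γ (Tf s)))
      (melnikovIntegral d m T₀) 0 := by
  obtain ⟨C, hC⟩ := exists_abs_wedge_sub_mul_melnikovIntegral_le hΦ hγ hd hm hdγ hmγ
  have hTs : ∀ᶠ s in 𝓝 (0:ℝ), Tf s ∈ Ioo 0 τ :=
    (hTf0 ▸ hTf.tendsto).eventually (Ioo_mem_nhds hT₀.1 hT₀.2)
  have hest : ∀ᶠ s in 𝓝 (0:ℝ), |wedge (Φ (γ (Tf s), 0)) ((Sf s, c) - γ (Tf s))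
      - s * melnikovIntegral d m (Tf s)| ≤ C * s ^ 2 := by
    filter_upwards [hsol, hC, hTs] with s ⟨X, hX, hX0, hXT⟩ hs hTs
    simpa only [hXT] using hs (Tf s) (Ioo_subset_Icc_self hTs) X hX hX0
  exact hTf0 ▸ hasDerivAt_of_abs_sub_mul_le_sq
    ((continuous_melnikovIntegral hd hm).continuousAt.comp hTf) hest

section ParameterLine

variable {m : ℕ} {f g : ℝ → ℝ → (Fin m → ℝ) → ℝ}

def ZvLine (f g : ℝ → ℝ → (Fin m → ℝ) → ℝ) (e : Fin m → ℝ) : (ℝ × ℝ) × ℝ → ℝ × ℝ :=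
  fun z => Zv f g (z.2 • e) z.1

theorem ZvLine_zero (e : Fin m → ℝ) (p : ℝ × ℝ) : ZvLine f g e (p, 0) = Zv f g 0 p := by
  simp [ZvLine]

theorem contDiff_ZvLine {n : WithTop ℕ∞} (e : Fin m → ℝ)
    (hf : ContDiff ℝ n (fun q : ℝ × ℝ × (Fin m → ℝ) => f q.1 q.2.1 q.2.2))
    (hg : ContDiff ℝ n (fun q : ℝ × ℝ × (Fin m → ℝ) => g q.1 q.2.1 q.2.2)) :
    ContDiff ℝ n (ZvLine f g e) := by
  have hL : ContDiff ℝ n fun z : (ℝ × ℝ) × ℝ => ((z.1.1, z.1.2, z.2 • e) : ℝ × ℝ × (Fin m → ℝ)) :=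
    by fun_prop
  exact (hf.comp hL).prodMk (hg.comp hL)

theorem kapF_eq_melnikovIntegral (γ : ℝ → ℝ × ℝ) (T : ℝ) (i : Fin m) :
    kapF f g γ T i = melnikovIntegral (fun t => divZ f g 0 (γ t))
      (fun t => f (γ t).1 (γ t).2 0 * pdA g i (γ t).1 (γ t).2 0
        - g (γ t).1 (γ t).2 0 * pdA f i (γ t).1 (γ t).2 0) T :=
  rfl

variable (hf : ContDiff ℝ 1 (fun q : ℝ × ℝ × (Fin m → ℝ) => f q.1 q.2.1 q.2.2))
  (hg : ContDiff ℝ 1 (fun q : ℝ × ℝ × (Fin m → ℝ) => g q.1 q.2.1 q.2.2))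
include hf hg

theorem hasDerivAt_ZvLine_comp (e : Fin m → ℝ) {ℓ : ℝ → (ℝ × ℝ) × ℝ} {v : (ℝ × ℝ) × ℝ} {r : ℝ}
    (hℓ : HasDerivAt ℓ v r) :
    HasDerivAt (fun r => ZvLine f g e (ℓ r)) (fderiv ℝ (ZvLine f g e) (ℓ r) v) r :=
  ((contDiff_ZvLine e hf hg).differentiable one_ne_zero (ℓ r)).hasFDerivAt.comp_hasDerivAt r hℓ

theorem fderiv_ZvLine_dx (e : Fin m → ℝ) (p : ℝ × ℝ) :
    fderiv ℝ (ZvLine f g e) (p, 0) ((1, 0), 0) = (pdX f p.1 p.2 0, pdX g p.1 p.2 0) := by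
  obtain ⟨x, y⟩ := p
  have h := hasDerivAt_ZvLine_comp hf hg e
    (((hasDerivAt_id x).prodMk (hasDerivAt_const x y)).prodMk (hasDerivAt_const x (0:ℝ)))
  simp only [ZvLine, Zv, zero_smul, id] at h
  exact Prod.ext h.fst.deriv.symm h.snd.deriv.symm

theorem fderiv_ZvLine_dy (e : Fin m → ℝ) (p : ℝ × ℝ) :
    fderiv ℝ (ZvLine f g e) (p, 0) ((0, 1), 0) = (pdY f p.1 p.2 0, pdY g p.1 p.2 0) := by
  obtain ⟨x, y⟩ := p
  have h := hasDerivAt_ZvLine_comp hf hg e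
    (((hasDerivAt_const y x).prodMk (hasDerivAt_id y)).prodMk (hasDerivAt_const y (0:ℝ)))
  simp only [ZvLine, Zv, zero_smul, id] at h
  exact Prod.ext h.fst.deriv.symm h.snd.deriv.symm

theorem fderiv_ZvLine_ds (i : Fin m) (p : ℝ × ℝ) :
    fderiv ℝ (ZvLine f g (Pi.single i 1)) (p, 0) ((0, 0), 1) =
      (pdA f i p.1 p.2 0, pdA g i p.1 p.2 0) := by
  obtain ⟨x, y⟩ := p
  have h := hasDerivAt_ZvLine_comp hf hg (Pi.single i 1)
    ((hasDerivAt_const (0:ℝ) (x, y)).prodMk (hasDerivAt_id (0:ℝ)))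
  have hdiff {h : ℝ → ℝ → (Fin m → ℝ) → ℝ}
      (hh : ContDiff ℝ 1 (fun q : ℝ × ℝ × (Fin m → ℝ) => h q.1 q.2.1 q.2.2)) :
      HasDerivAt (fun s : ℝ => h x y (s • Pi.single i 1)) (pdA h i x y 0) 0 :=
    hasDerivAt_comp_smul_single ((hh.differentiable one_ne_zero (x, y, 0)).comp
      (g := fun q : ℝ × ℝ × (Fin m → ℝ) => h q.1 q.2.1 q.2.2) (0 : Fin m → ℝ)
      (f := fun α => (x, y, α)) (by fun_prop)) i
  simp only [ZvLine, Zv, id] at h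
  exact Prod.ext (h.fst.unique (hdiff hf)) (h.snd.unique (hdiff hg))

theorem divZ_eq_fderiv_ZvLine (e : Fin m → ℝ) (p : ℝ × ℝ) :
    divZ f g 0 p =
      (fderiv ℝ (ZvLine f g e) (p, 0) ((1, 0), 0)).1 +
        (fderiv ℝ (ZvLine f g e) (p, 0) ((0, 1), 0)).2 := by
  rw [fderiv_ZvLine_dx hf hg, fderiv_ZvLine_dy hf hg, divZ]

theorem melnikovDensity_eq_wedge_fderiv_ZvLine (i : Fin m) (p : ℝ × ℝ) :
    f p.1 p.2 0 * pdA g i p.1 p.2 0 - g p.1 p.2 0 * pdA f i p.1 p.2 0 =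
      wedge (ZvLine f g (Pi.single i 1) (p, 0))
        (fderiv ℝ (ZvLine f g (Pi.single i 1)) (p, 0) ((0, 0), 1)) := by
  rw [fderiv_ZvLine_ds hf hg, ZvLine_zero, wedge, Zv]

end ParameterLine

theorem hasDerivAt_sectionHit {m : ℕ} {f g : ℝ → ℝ → (Fin m → ℝ) → ℝ}
    (hf : ContDiff ℝ 2 (fun q : ℝ × ℝ × (Fin m → ℝ) => f q.1 q.2.1 q.2.2))
    (hg : ContDiff ℝ 2 (fun q : ℝ × ℝ × (Fin m → ℝ) => g q.1 q.2.1 q.2.2)) (i : Fin m)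
    {τ T₀ : ℝ} (hT₀ : T₀ ∈ Ioo 0 τ) {γ : ℝ → ℝ × ℝ} (hγ : IsSolOn f g 0 γ (Icc 0 τ))
    {b c : ℝ} (hbc : γ T₀ = (b, c)) (hgbc : g b c 0 ≠ 0) {Tf Sf : ℝ → ℝ}
    (hTf0 : Tf 0 = T₀) (hSf0 : Sf 0 = b) (hTf : DifferentiableAt ℝ Tf 0)
    (hSf : DifferentiableAt ℝ Sf 0)
    (hsol : ∀ᶠ s in 𝓝 (0:ℝ), ∃ X : ℝ → ℝ × ℝ,
      IsSolOn f g (s • Pi.single i 1) X (Icc 0 (Tf s)) ∧ X 0 = γ 0 ∧ X (Tf s) = (Sf s, c)) :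
    HasDerivAt Sf (-(kapF f g γ T₀ i) / g b c 0) 0 := by
  have hf1 := hf.of_le one_le_two
  have hg1 := hg.of_le one_le_two
  set Φ := ZvLine f g (Pi.single i 1)
  have hΦ : ContDiff ℝ 2 Φ := contDiff_ZvLine _ hf hg
  have hγΦ : ∀ t ∈ Icc 0 τ, HasDerivAt γ (Φ (γ t, 0)) t := fun t ht => by
    simpa only [Φ, ZvLine_zero] using hγ t ht
  obtain ⟨γc, hγc, hγc_eq⟩ := (continuousOn_of_forall_continuousAt fun t ht =>
    (hγ t ht).continuousAt).exists_continuous_eqOn_Icc (hT₀.1.le.trans hT₀.2.le)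
  set d : ℝ → ℝ := fun t =>
    (fderiv ℝ Φ (γc t, 0) ((1, 0), 0)).1 + (fderiv ℝ Φ (γc t, 0) ((0, 1), 0)).2
  set mel : ℝ → ℝ := fun t => wedge (Φ (γc t, 0)) (fderiv ℝ Φ (γc t, 0) ((0, 0), 1))
  have hDΦ : Continuous fun t => fderiv ℝ Φ (γc t, 0) :=
    (hΦ.continuous_fderiv two_ne_zero).comp (hγc.prodMk continuous_const)
  have hΦγ : Continuous fun t => Φ (γc t, 0) := hΦ.continuous.comp (hγc.prodMk continuous_const)
  have hd : Continuous d := by fun_prop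
  have hmel : Continuous mel := by simp only [mel, wedge]; fun_prop
  -- two computations of the derivative at `0` of `s ↦ Z(γ (Tf s)) ∧ ((Sf s, c) - γ (Tf s))`
  have hH₁ := hasDerivAt_wedge_sectionHit_eq_melnikovIntegral hΦ hT₀ hγΦ hd hmel
    (fun t ht => by simp only [d, hγc_eq ht]) (fun t ht => by simp only [mel, hγc_eq ht])
    hTf0 hTf.continuousAt hsol
  have hH₂ := hasDerivAt_wedge_sectionHit (Φ₀ := fun p => Φ (p, 0)) (c := c)
    (((hΦ.differentiable two_ne_zero) _).comp (b, c)
      (differentiableAt_id.prodMk (differentiableAt_const (0:ℝ))))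
    (by simpa only [hbc] using hγΦ T₀ (Ioo_subset_Icc_self hT₀)) hbc hTf.hasDerivAt hTf0
    hSf.hasDerivAt hSf0
  have hκ : kapF f g γ T₀ i = melnikovIntegral d mel T₀ := by
    rw [kapF_eq_melnikovIntegral]
    refine melnikovIntegral_congr hT₀.1.le (fun t ht => ?_) (fun t ht => ?_) <;>
      simp only [d, mel, hγc_eq (Icc_subset_Icc_right hT₀.2.le ht)]
    · exact divZ_eq_fderiv_ZvLine hf1 hg1 _ (γ t)
    · exact melnikovDensity_eq_wedge_fderiv_ZvLine hf1 hg1 i (γ t)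
  have hSf' : deriv Sf 0 = -(kapF f g γ T₀ i) / g b c 0 := by
    rw [hκ, ← hH₂.unique hH₁]
    simp only [Φ, ZvLine_zero, Zv]
    field_simp
  exact hSf' ▸ hSf.hasDerivAt

section TimeReversal

variable {m : ℕ} {f g : ℝ → ℝ → (Fin m → ℝ) → ℝ}

theorem IsSolOn.reverse {α : Fin m → ℝ} {γ : ℝ → ℝ × ℝ} {a b : ℝ} (hγ : IsSolOn f g α γ (Icc a b))
    (c : ℝ) : IsSolOn (fun x y α => -f x y α) (fun x y α => -g x y α) α (fun t => γ (c - t))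
      (Icc (c - b) (c - a)) := by
  intro t ht
  have h := (hγ (c - t) ⟨by linarith [ht.2], by linarith [ht.1]⟩).scomp t
    ((hasDerivAt_id t).const_sub c)
  refine h.congr_deriv ?_
  simp [Zv]

theorem divZ_neg (α : Fin m → ℝ) (p : ℝ × ℝ) :
    divZ (fun x y α => -f x y α) (fun x y α => -g x y α) α p = -divZ f g α p := by
  simp only [divZ, pdX, pdY]
  rw [deriv.fun_neg, deriv.fun_neg, neg_add]

theorem pdA_neg (h : ℝ → ℝ → (Fin m → ℝ) → ℝ) (i : Fin m) (x y : ℝ) (α : Fin m → ℝ) :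
    pdA (fun x y α => -h x y α) i x y α = -pdA h i x y α := by
  simp [pdA]

theorem kapF_reverse (γ : ℝ → ℝ × ℝ) (τ₀ T : ℝ) (i : Fin m) :
    kapF (fun x y α => -f x y α) (fun x y α => -g x y α) (fun t => γ (τ₀ - t)) (τ₀ - T) i =
      -kapF f g (fun t => γ (t + τ₀)) (T - τ₀) i := by
  have h := melnikovIntegral_comp_neg (fun t => divZ f g 0 (γ (t + τ₀)))
    (fun t => f (γ (t + τ₀)).1 (γ (t + τ₀)).2 0 * pdA g i (γ (t + τ₀)).1 (γ (t + τ₀)).2 0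
      - g (γ (t + τ₀)).1 (γ (t + τ₀)).2 0 * pdA f i (γ (t + τ₀)).1 (γ (t + τ₀)).2 0) (τ₀ - T)
  simp only [neg_add_eq_sub, neg_sub] at h
  rw [kapF_eq_melnikovIntegral, kapF_eq_melnikovIntegral, ← h]
  simp only [divZ_neg, pdA_neg, neg_mul_neg]

end TimeReversal

theorem differentiableAt_of_contDiffOn_ball_prod {m k : ℕ} (hk : k ≠ 0)
    {σ : ℝ × ℝ → (Fin m → ℝ) → ℝ} {p : ℝ × ℝ} {ε : ℝ} (hε : 0 < ε) {U : Set (Fin m → ℝ)}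
    (hU : U ∈ 𝓝 0)
    (hσ : ContDiffOn ℝ k (fun q : (ℝ × ℝ) × (Fin m → ℝ) => σ q.1 q.2) (Metric.ball p ε ×ˢ U)) :
    DifferentiableAt ℝ (σ p) 0 :=
  ((hσ.contDiffAt (prod_mem_nhds (Metric.ball_mem_nhds p hε) hU)).differentiableAt
    (by exact_mod_cast hk)).comp (0 : Fin m → ℝ) (f := fun α => (p, α)) (by fun_prop)

theorem statement2_general
    (m k : ℕ) (hk : 3 ≤ k)
    (f g : ℝ → ℝ → (Fin m → ℝ) → ℝ)
    (hf : ContDiff ℝ k (fun q : ℝ × ℝ × (Fin m → ℝ) => f q.1 q.2.1 q.2.2))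
    (hg : ContDiff ℝ k (fun q : ℝ × ℝ × (Fin m → ℝ) => g q.1 q.2.1 q.2.2))
    (a : ℝ)
    (τ₀ : ℝ)
    (γ : ℝ → ℝ × ℝ) (hγsol : IsSolOn f g 0 γ (Set.Icc 0 τ₀))
    (hγ0 : γ 0 = (-a, 0)) (hγτ : γ τ₀ = (a, 0))
    (τp b c : ℝ) (hτp : τp ∈ Set.Ioo 0 τ₀) (hbc : γ τp = (b, c)) (hgbc : g b c 0 < 0)
    (ε₁ : ℝ) (hε₁ : 0 < ε₁) (U₁ : Set (Fin m → ℝ)) (hU₁ : U₁ ∈ 𝓝 (0 : Fin m → ℝ))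
    (τP σP τM σM : ℝ × ℝ → (Fin m → ℝ) → ℝ)
    (hτPc : ContDiffOn ℝ k (fun q : (ℝ × ℝ) × (Fin m → ℝ) => τP q.1 q.2)
      (Metric.ball ((-a, 0) : ℝ × ℝ) ε₁ ×ˢ U₁))
    (hσPc : ContDiffOn ℝ k (fun q : (ℝ × ℝ) × (Fin m → ℝ) => σP q.1 q.2)
      (Metric.ball ((-a, 0) : ℝ × ℝ) ε₁ ×ˢ U₁))
    (hτMc : ContDiffOn ℝ k (fun q : (ℝ × ℝ) × (Fin m → ℝ) => τM q.1 q.2)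
      (Metric.ball ((a, 0) : ℝ × ℝ) ε₁ ×ˢ U₁))
    (hσMc : ContDiffOn ℝ k (fun q : (ℝ × ℝ) × (Fin m → ℝ) => σM q.1 q.2)
      (Metric.ball ((a, 0) : ℝ × ℝ) ε₁ ×ˢ U₁))
    (hτPv : τP (-a, 0) 0 = τp) (hσPv : σP (-a, 0) 0 = b)
    (hτMv : τM (a, 0) 0 = τp - τ₀) (hσMv : σM (a, 0) 0 = b)
    (hP : ∀ p ∈ Metric.ball ((-a, 0) : ℝ × ℝ) ε₁, ∀ α ∈ U₁,
      0 < τP p α ∧ ∃ γ' : ℝ → ℝ × ℝ, IsSolOn f g α γ' (Set.Icc 0 (τP p α)) ∧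
        γ' 0 = p ∧ γ' (τP p α) = (σP p α, c))
    (hM : ∀ p ∈ Metric.ball ((a, 0) : ℝ × ℝ) ε₁, ∀ α ∈ U₁,
      τM p α < 0 ∧ ∃ γ' : ℝ → ℝ × ℝ, IsSolOn f g α γ' (Set.Icc (τM p α) 0) ∧
        γ' 0 = p ∧ γ' (τM p α) = (σM p α, c))
    :
    ∀ i : Fin m,
      sdA σP i (-a) 0 0 = -(kapF f g γ τp i) / g b c 0 ∧
      sdA σM i a 0 0 = -(kapF f g (fun t => γ (t + τ₀)) (τp - τ₀) i) / g b c 0 := by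
  intro i
  have hk0 : k ≠ 0 := by omega
  have h2k : ((2 : ℕ) : WithTop ℕ∞) ≤ k := by exact_mod_cast (by omega : 2 ≤ k)
  have hline {σ : ℝ × ℝ → (Fin m → ℝ) → ℝ} {p : ℝ × ℝ}
      (hσ : ContDiffOn ℝ k (fun q : (ℝ × ℝ) × (Fin m → ℝ) => σ q.1 q.2) (Metric.ball p ε₁ ×ˢ U₁)) :=
    hasDerivAt_comp_smul_single (differentiableAt_of_contDiffOn_ball_prod hk0 hε₁ hU₁ hσ) i
  have hU : ∀ᶠ s : ℝ in 𝓝 0, s • (Pi.single i 1 : Fin m → ℝ) ∈ U₁ :=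
    ((continuous_id.smul continuous_const).tendsto' 0 0 (zero_smul _ _)).eventually_mem hU₁
  constructor
  · refine (hline hσPc).unique (hasDerivAt_sectionHit (hf.of_le h2k) (hg.of_le h2k) i hτp hγsol
      hbc hgbc.ne (by simp [hτPv]) (by simp [hσPv]) (hline hτPc).differentiableAt
      (hline hσPc).differentiableAt ?_)
    filter_upwards [hU] with s hs
    obtain ⟨-, X, hX, hX0, hXT⟩ := hP _ (Metric.mem_ball_self hε₁) _ hs
    exact ⟨X, hX, hX0.trans hγ0.symm, hXT⟩
  -- `σ⁻` is the forward transition map of the time-reversed field `-Z⁺` along `γ (τ₀ - ·)`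
  · refine (hline hσMc).unique ((hasDerivAt_sectionHit (hf.of_le h2k).neg (hg.of_le h2k).neg i
      (τ := τ₀) (T₀ := τ₀ - τp) ⟨by linarith [hτp.2], by linarith [hτp.1]⟩
      (by simpa using hγsol.reverse τ₀) (by simpa using hbc) (neg_ne_zero.2 hgbc.ne)
      (by simp [hτMv]) (by simp [hσMv]) (hline hτMc).differentiableAt.neg
      (hline hσMc).differentiableAt ?_).congr_deriv ?_)
    · filter_upwards [hU] with s hs
      obtain ⟨-, X, hX, hX0, hXT⟩ := hM _ (Metric.mem_ball_self hε₁) _ hs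
      exact ⟨fun t => X (0 - t), by simpa using hX.reverse 0, by simp [hX0, hγτ],
        by simpa using hXT⟩
    · rw [kapF_reverse, neg_neg, div_neg, neg_div]

/-- parameter derivatives of the transition maps:
`σ⁺_{αᵢ}(−a,0;0) = −κᵢ⁺/g⁺(b,c;0)` and `σ⁻_{αᵢ}(a,0;0) = −κᵢ⁻/g⁺(b,c;0)`. -/
theorem statement2
    (m k : ℕ) (hk : 3 ≤ k)
    (f g : ℝ → ℝ → (Fin m → ℝ) → ℝ)
    (hf : ContDiff ℝ k (fun q : ℝ × ℝ × (Fin m → ℝ) => f q.1 q.2.1 q.2.2))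
    (hg : ContDiff ℝ k (fun q : ℝ × ℝ × (Fin m → ℝ) => g q.1 q.2.1 q.2.2))
    (a : ℝ) (ha : 0 < a)
    (τ₀ : ℝ) (hτ₀ : 0 < τ₀)
    (γ : ℝ → ℝ × ℝ) (hγsol : IsSolOn f g 0 γ (Set.Icc 0 τ₀))
    (hγ0 : γ 0 = (-a, 0)) (hγτ : γ τ₀ = (a, 0))
    (hγup : ∀ t ∈ Set.Ioo 0 τ₀, 0 < (γ t).2)
    (τp b c : ℝ) (hτp : τp ∈ Set.Ioo 0 τ₀) (hbc : γ τp = (b, c)) (hgbc : g b c 0 < 0)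
    (ε₁ : ℝ) (hε₁ : 0 < ε₁) (U₁ : Set (Fin m → ℝ)) (hU₁ : U₁ ∈ 𝓝 (0 : Fin m → ℝ))
    (τP σP τM σM : ℝ × ℝ → (Fin m → ℝ) → ℝ)
    (hτPc : ContDiffOn ℝ k (fun q : (ℝ × ℝ) × (Fin m → ℝ) => τP q.1 q.2)
      (Metric.ball ((-a, 0) : ℝ × ℝ) ε₁ ×ˢ U₁))
    (hσPc : ContDiffOn ℝ k (fun q : (ℝ × ℝ) × (Fin m → ℝ) => σP q.1 q.2)
      (Metric.ball ((-a, 0) : ℝ × ℝ) ε₁ ×ˢ U₁))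
    (hτMc : ContDiffOn ℝ k (fun q : (ℝ × ℝ) × (Fin m → ℝ) => τM q.1 q.2)
      (Metric.ball ((a, 0) : ℝ × ℝ) ε₁ ×ˢ U₁))
    (hσMc : ContDiffOn ℝ k (fun q : (ℝ × ℝ) × (Fin m → ℝ) => σM q.1 q.2)
      (Metric.ball ((a, 0) : ℝ × ℝ) ε₁ ×ˢ U₁))
    (hτPv : τP (-a, 0) 0 = τp) (hσPv : σP (-a, 0) 0 = b)
    (hτMv : τM (a, 0) 0 = τp - τ₀) (hσMv : σM (a, 0) 0 = b)
    (hP : ∀ p ∈ Metric.ball ((-a, 0) : ℝ × ℝ) ε₁, ∀ α ∈ U₁,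
      0 < τP p α ∧ ∃ γ' : ℝ → ℝ × ℝ, IsSolOn f g α γ' (Set.Icc 0 (τP p α)) ∧
        γ' 0 = p ∧ γ' (τP p α) = (σP p α, c))
    (hM : ∀ p ∈ Metric.ball ((a, 0) : ℝ × ℝ) ε₁, ∀ α ∈ U₁,
      τM p α < 0 ∧ ∃ γ' : ℝ → ℝ × ℝ, IsSolOn f g α γ' (Set.Icc (τM p α) 0) ∧
        γ' 0 = p ∧ γ' (τM p α) = (σM p α, c))
    :
    ∀ i : Fin m,
      sdA σP i (-a) 0 0 = -(kapF f g γ τp i) / g b c 0 ∧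
      sdA σM i a 0 0 = -(kapF f g (fun t => γ (t + τ₀)) (τp - τ₀) i) / g b c 0 :=
  statement2_general m k hk f g hf hg a τ₀ γ hγsol hγ0 hγτ τp b c hτp hbc hgbc ε₁ hε₁ U₁ hU₁ τP σP
    τM σM hτPc hσPc hτMc hσMc hτPv hσPv hτMv hσMv hP hM
end
end

section
/- Assume (H1) and (H2)′ with f⁺(−a,0;0) > 0, and let ϑ₁⁻, ϑ₁⁺ be the smooth functions giving the unique zeros −ϑ₁⁻(α) and ϑ₁⁺(α) of g⁺(·,0;α) near ∓a. Define f^s(x;α) := g⁺(x,0;α)·f⁺(−x,0;α) − g⁺(−x,0;α)·f⁺(x,0;α). Then there exist a neighborhood U₅ of α = 0 and a smooth function ϖ : U₅ → ℝ with ϖ(α) = a + Σ_{i=1}^{m} [(g⁺_{αᵢ}(−a,0;0)f⁺(a,0;0) − g⁺_{αᵢ}(a,0;0)f⁺(−a,0;0))/(g⁺_x(−a,0;0)f⁺(a,0;0) + g⁺_x(a,0;0)f⁺(−a,0;0))] αᵢ + O(‖α‖²) such that for every α ∈ U₅ with ϑ₁⁻(α) ≠ ϑ₁⁺(α): x = −ϖ(α)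 is the unique zero of f^s(·;α) in the open interval with endpoints −ϑ₁⁻(α) and −ϑ₁⁺(α), and f^s_x(x;α) > 0 on that interval. -/
open scoped Topology BigOperators
open Set Asymptotics MeasureTheory intervalIntegral

noncomputable section

/-!
At `α = 0` both `g⁺(∓a, 0; 0)` vanish, so `f^s(-a; 0) = 0` and
`∂ₓ f^s(-a; 0) = g⁺ₓ(-a) f⁺(a) + g⁺ₓ(a) f⁺(-a) > 0`; the implicit function theorem gives the
smooth branch `x = -ϖ(α)` of zeros and its linear part. Near `(α, x) = (0, -a)` the function
`f^s(·; α)` is increasing, `g⁺(·, 0; α)` is increasing near `∓a` and `f⁺(·, 0; α)` is positive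
near `±a`. Since `g⁺` vanishes at `-ϑ₁⁻` and `ϑ₁⁺`, at either endpoint `x` of the interval
`f^s(x; α)` has the sign of `x - x'`, where `x'` is the other endpoint; so the increasing function
`f^s(·; α)` is negative at the left endpoint, positive at the right one, and its unique zero lies
strictly between them.
-/

open Filter Metric
open scoped ContDiff

section General

variable {E F : Type*} [NormedAddCommGroup E] [NormedSpace ℝ E]
  [NormedAddCommGroup F] [NormedSpace ℝ F]

theorem ContDiffAt.isBigO_sub_sub_fderiv {φ : E → F} {x : E} (h : ContDiffAt ℝ 2 φ x) :
    (fun y => φ y - φ x - fderiv ℝ φ x (y - x)) =O[𝓝 x] fun y => ‖y - x‖ ^ 2 := by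
  have hdiff : ∀ᶠ y in 𝓝 x, DifferentiableAt ℝ φ y :=
    (h.eventually (by simp)).mono fun y hy => hy.differentiableAt (by norm_num)
  obtain ⟨C, hC0, hC⟩ :=
    ((h.fderiv_right (m := 1) le_rfl).differentiableAt one_ne_zero).isBigO_sub.exists_pos
  obtain ⟨r, hr, hball⟩ := eventually_nhds_iff_ball.1 (hdiff.and hC.bound)
  refine isBigO_iff.2 ⟨C, ?_⟩
  filter_upwards [ball_mem_nhds x hr] with y hy
  have hsub : closedBall x ‖y - x‖ ⊆ ball x r :=
    closedBall_subset_ball (by rwa [mem_ball, dist_eq_norm] at hy)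
  have hbound : ∀ z ∈ closedBall x ‖y - x‖, ‖fderiv ℝ φ z - fderiv ℝ φ x‖ ≤ C * ‖y - x‖ := by
    intro z hz
    calc ‖fderiv ℝ φ z - fderiv ℝ φ x‖ ≤ C * ‖z - x‖ := (hball z (hsub hz)).2
      _ ≤ C * ‖y - x‖ := by
        gcongr
        rwa [mem_closedBall, dist_eq_norm] at hz
  calc ‖φ y - φ x - fderiv ℝ φ x (y - x)‖ ≤ C * ‖y - x‖ * ‖y - x‖ :=
        (convex_closedBall x _).norm_image_sub_le_of_norm_fderiv_le'
          (fun z hz => (hball z (hsub hz)).1) hbound (mem_closedBall_self (norm_nonneg _))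
          (by simp [dist_eq_norm])
    _ = C * ‖‖y - x‖ ^ 2‖ := by rw [norm_pow, norm_norm, sq, mul_assoc]

theorem ContinuousLinearMap.isInvertible_of_apply_one_ne_zero {ℓ : ℝ →L[ℝ] ℝ} (h : ℓ 1 ≠ 0) :
    ℓ.IsInvertible :=
  .of_inverse (g := (ℓ 1)⁻¹ • .id ℝ ℝ) (by ext; simp [h]) (by ext; simp [h])

theorem ContinuousLinearMap.inverse_apply_of_apply_one_ne_zero {ℓ : ℝ →L[ℝ] ℝ} (h : ℓ 1 ≠ 0)
    (y : ℝ) : ℓ.inverse y = (ℓ 1)⁻¹ * y := by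
  rw [(isInvertible_of_apply_one_ne_zero h).inverse_apply_eq]
  conv_rhs => rw [← mul_one ((ℓ 1)⁻¹ * y), ← smul_eq_mul, map_smul, smul_eq_mul]
  field_simp

theorem ContinuousLinearMap.apply_eq_sum_single {ι : Type*} [Fintype ι] [DecidableEq ι]
    (L : (ι → ℝ) →L[ℝ] ℝ) (y : ι → ℝ) : L y = ∑ i, L (Pi.single i 1) * y i := by
  conv_lhs => rw [← Finset.univ_sum_single y]
  refine (map_sum L _ _).trans (Finset.sum_congr rfl fun i _ => ?_)
  rw [mul_comm, ← smul_eq_mul, ← map_smul, ← Pi.single_smul, smul_eq_mul, mul_one]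

theorem HasFDerivAt.hasDerivAt_comp_prodMk {Ψ : E × ℝ → F} {L : E × ℝ →L[ℝ] F} {e : E} {x : ℝ}
    (h : HasFDerivAt Ψ L (e, x)) : HasDerivAt (fun t => Ψ (e, t)) (L (0, 1)) x :=
  h.comp_hasDerivAt x (hasFDerivAt_prodMk_right e x).hasDerivAt

theorem ContDiff.continuous_deriv_comp_prodMk {Ψ : E × ℝ → F} {n : ℕ∞ω} (hΨ : ContDiff ℝ n Ψ)
    (hn : n ≠ 0) :
    Continuous fun p : E × ℝ => deriv (fun t => Ψ (p.1, t)) p.2 := by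
  have hderiv : ∀ p : E × ℝ, deriv (fun t => Ψ (p.1, t)) p.2 = fderiv ℝ Ψ p (0, 1) := fun p =>
    ((hΨ.differentiable hn p).hasFDerivAt.hasDerivAt_comp_prodMk).deriv
  simp only [hderiv]
  exact (hΨ.continuous_fderiv hn).clm_apply continuous_const

theorem ContDiff.differentiable_comp_prodMk {Ψ : E × ℝ → F} {n : ℕ∞ω} (hΨ : ContDiff ℝ n Ψ)
    (hn : n ≠ 0) (e : E) : Differentiable ℝ fun t => Ψ (e, t) :=
  (hΨ.differentiable hn).comp (by fun_prop)

end General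

section Implicit

variable {E : Type*} [NormedAddCommGroup E] [NormedSpace ℝ E] [CompleteSpace E]

theorem ContDiffAt.exists_implicit_of_hasDerivAt_ne_zero {Ψ : E × ℝ → ℝ} {u : E × ℝ} {n : ℕ∞ω}
    (hΨ : ContDiffAt ℝ n Ψ u) (hn : n ≠ 0) {Ψ₁ : E →L[ℝ] ℝ} {Ψ₂ : ℝ}
    (h₁ : HasFDerivAt (fun e => Ψ (e, u.2)) Ψ₁ u.1) (h₂ : HasDerivAt (fun x => Ψ (u.1, x)) Ψ₂ u.2)
    (hΨ₂ : Ψ₂ ≠ 0) :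
    ∃ φ : E → ℝ, φ u.1 = u.2 ∧ ContDiffAt ℝ n φ u.1 ∧ (∀ᶠ e in 𝓝 u.1, Ψ (e, φ e) = Ψ u) ∧
      HasFDerivAt φ (-Ψ₂⁻¹ • Ψ₁) u.1 := by
  have hL := (hΨ.differentiableAt hn).hasFDerivAt
  have hL₁ : fderiv ℝ Ψ u ∘L .inl ℝ E ℝ = Ψ₁ :=
    (hL.comp u.1 (hasFDerivAt_prodMk_left u.1 u.2)).unique h₁
  have hL₂ : (fderiv ℝ Ψ u ∘L .inr ℝ E ℝ) 1 = Ψ₂ :=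
    (hL.comp_hasDerivAt u.2 ((hasFDerivAt_prodMk_right u.1 u.2).hasDerivAt)).unique h₂
  have hinv := ContinuousLinearMap.isInvertible_of_apply_one_ne_zero (hL₂ ▸ hΨ₂)
  refine ⟨hΨ.implicitFunction hn hinv, hΨ.implicitFunction_apply_self hn hinv,
    hΨ.contDiffAt_implicitFunction hn hinv, hΨ.eventually_apply_implicitFunction hn hinv, ?_⟩
  refine (hΨ.hasStrictFDerivAt_implicitFunction hn hinv).hasFDerivAt.congr_fderiv ?_
  ext v
  simp [ContinuousLinearMap.inverse_apply_of_apply_one_ne_zero (hL₂ ▸ hΨ₂), ← hL₁, ← hL₂]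

end Implicit

section Order

variable {s : Set ℝ} {G : ℝ → ℝ} {t t₀ : ℝ}

theorem StrictMonoOn.pos_mul_sub_of_eq_zero (hG : StrictMonoOn G s) (ht : t ∈ s) (ht₀ : t₀ ∈ s)
    (h0 : G t₀ = 0) (hne : t ≠ t₀) : 0 < G t * (t - t₀) := by
  rcases hne.lt_or_gt with h | h
  · exact mul_pos_of_neg_of_neg (h0 ▸ hG ht ht₀ h) (sub_neg.2 h)
  · exact mul_pos (h0 ▸ hG ht₀ ht h) (sub_pos.2 h)

theorem StrictAntiOn.mul_sub_neg_of_eq_zero (hG : StrictAntiOn G s) (ht : t ∈ s) (ht₀ : t₀ ∈ s)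
    (h0 : G t₀ = 0) (hne : t ≠ t₀) : G t * (t - t₀) < 0 := by
  have := hG.neg.pos_mul_sub_of_eq_zero ht ht₀ (by simp [h0]) hne
  simpa [neg_mul] using this

theorem StrictMonoOn.mem_Ioo_of_eq_zero {y₁ y₂ z : ℝ} (hG : StrictMonoOn G s) (h₁ : y₁ ∈ s)
    (h₂ : y₂ ∈ s) (hz : z ∈ s) (hGz : G z = 0) (hs₁ : 0 < G y₁ * (y₁ - y₂))
    (hs₂ : 0 < G y₂ * (y₂ - y₁)) : z ∈ Ioo (min y₁ y₂) (max y₁ y₂) := by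
  wlog hlt : y₁ < y₂ generalizing y₁ y₂
  · have hne : y₁ ≠ y₂ := by rintro rfl; simp at hs₁
    rw [min_comm, max_comm]
    exact this h₂ h₁ hs₂ hs₁ (lt_of_le_of_ne (not_lt.1 hlt) hne.symm)
  have hneg : G y₁ < G z := hGz ▸ neg_of_mul_pos_left hs₁ (sub_neg.2 hlt).le
  have hpos : G z < G y₂ := hGz ▸ pos_of_mul_pos_left hs₂ (sub_pos.2 hlt).le
  rw [min_eq_left hlt.le, max_eq_right hlt.le]
  exact ⟨(hG.lt_iff_lt h₁ hz).1 hneg, (hG.lt_iff_lt hz h₂).1 hpos⟩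

theorem Convex.strictMonoOn_of_deriv_pos (hs : Convex ℝ s)
    (hG : ∀ x ∈ s, 0 < deriv G x) : StrictMonoOn G s :=
  _root_.strictMonoOn_of_deriv_pos hs
    (fun x hx => (differentiableAt_of_deriv_ne_zero (hG x hx).ne').continuousAt.continuousWithinAt)
    (fun x hx => hG x (interior_subset hx))

theorem Convex.strictAntiOn_of_deriv_neg (hs : Convex ℝ s)
    (hG : ∀ x ∈ s, deriv G x < 0) : StrictAntiOn G s :=
  _root_.strictAntiOn_of_deriv_neg hs
    (fun x hx => (differentiableAt_of_deriv_ne_zero (hG x hx).ne).continuousAt.continuousWithinAt)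
    (fun x hx => hG x (interior_subset hx))

end Order

section SlidingVectorField

variable {m : ℕ} {n : ℕ∞ω} {f g h : ℝ → ℝ → (Fin m → ℝ) → ℝ}

theorem ContDiff.restrict_xAxis
    (hh : ContDiff ℝ n fun q : ℝ × ℝ × (Fin m → ℝ) => h q.1 q.2.1 q.2.2) :
    ContDiff ℝ n fun p : (Fin m → ℝ) × ℝ => h p.2 0 p.1 :=
  hh.comp (contDiff_snd.prodMk (contDiff_const.prodMk contDiff_fst))

theorem ContDiff.differentiable_param
    (hh : ContDiff ℝ n fun q : ℝ × ℝ × (Fin m → ℝ) => h q.1 q.2.1 q.2.2) (hn : n ≠ 0) (x y : ℝ) :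
    Differentiable ℝ (h x y) :=
  (hh.differentiable hn).comp (contDiff_const.prodMk (contDiff_const.prodMk contDiff_id)
    |>.differentiable hn)

theorem ContDiff.hasDerivAt_pdX
    (hh : ContDiff ℝ n fun q : ℝ × ℝ × (Fin m → ℝ) => h q.1 q.2.1 q.2.2) (hn : n ≠ 0)
    (x : ℝ) (α : Fin m → ℝ) : HasDerivAt (fun x' => h x' 0 α) (pdX h x 0 α) x :=
  (hh.restrict_xAxis.differentiable_comp_prodMk hn α x).hasDerivAt

theorem contDiff_fSlide
    (hf : ContDiff ℝ n fun q : ℝ × ℝ × (Fin m → ℝ) => f q.1 q.2.1 q.2.2)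
    (hg : ContDiff ℝ n fun q : ℝ × ℝ × (Fin m → ℝ) => g q.1 q.2.1 q.2.2) :
    ContDiff ℝ n fun p : (Fin m → ℝ) × ℝ => fSlide f g p.2 p.1 := by
  have hneg : ContDiff ℝ n fun p : (Fin m → ℝ) × ℝ => (p.1, -p.2) :=
    contDiff_fst.prodMk contDiff_snd.neg
  exact (hg.restrict_xAxis.mul (hf.restrict_xAxis.comp hneg)).sub
    ((hg.restrict_xAxis.comp hneg).mul hf.restrict_xAxis)

theorem hasDerivAt_fSlide
    (hf : ContDiff ℝ n fun q : ℝ × ℝ × (Fin m → ℝ) => f q.1 q.2.1 q.2.2)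
    (hg : ContDiff ℝ n fun q : ℝ × ℝ × (Fin m → ℝ) => g q.1 q.2.1 q.2.2)
    (hn : n ≠ 0) (x : ℝ) (α : Fin m → ℝ) :
    HasDerivAt (fun x' => fSlide f g x' α)
      (pdX g x 0 α * f (-x) 0 α - g x 0 α * pdX f (-x) 0 α
        + (pdX g (-x) 0 α * f x 0 α - g (-x) 0 α * pdX f x 0 α)) x := by
  have hg' := hg.hasDerivAt_pdX hn
  have hf' := hf.hasDerivAt_pdX hn
  have hneg := hasDerivAt_neg x
  refine (((hg' x α).mul ((hf' (-x) α).comp x hneg)).sub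
    (((hg' (-x) α).comp x hneg).mul (hf' x α))).congr_deriv ?_
  simp only [Function.comp_apply]
  ring

theorem hasFDerivAt_fSlide_param
    (hf : ContDiff ℝ n fun q : ℝ × ℝ × (Fin m → ℝ) => f q.1 q.2.1 q.2.2)
    (hg : ContDiff ℝ n fun q : ℝ × ℝ × (Fin m → ℝ) => g q.1 q.2.1 q.2.2)
    (hn : n ≠ 0) (x : ℝ) (α : Fin m → ℝ) :
    HasFDerivAt (fun α' => fSlide f g x α')
      (g x 0 α • fderiv ℝ (f (-x) 0) α + f (-x) 0 α • fderiv ℝ (g x 0) α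
        - (g (-x) 0 α • fderiv ℝ (f x 0) α + f x 0 α • fderiv ℝ (g (-x) 0) α)) α := by
  have hg' := fun x => (hg.differentiable_param hn x 0 α).hasFDerivAt
  have hf' := fun x => (hf.differentiable_param hn x 0 α).hasFDerivAt
  exact ((hg' x).mul (hf' (-x))).sub ((hg' (-x)).mul (hf' x))

theorem exists_fSlide_eq_zero_branch
    (hf : ContDiff ℝ n fun q : ℝ × ℝ × (Fin m → ℝ) => f q.1 q.2.1 q.2.2)
    (hg : ContDiff ℝ n fun q : ℝ × ℝ × (Fin m → ℝ) => g q.1 q.2.1 q.2.2)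
    (hn : n ≠ 0) {a : ℝ} (hgm : g (-a) 0 0 = 0)
    (hgp : g a 0 0 = 0) (hD : pdX g (-a) 0 0 * f a 0 0 + pdX g a 0 0 * f (-a) 0 0 ≠ 0) :
    ∃ φ : (Fin m → ℝ) → ℝ, φ 0 = -a ∧ ContDiffAt ℝ n φ 0 ∧
      (∀ᶠ α in 𝓝 0, fSlide f g (φ α) α = 0) ∧
      HasFDerivAt φ (-(pdX g (-a) 0 0 * f a 0 0 + pdX g a 0 0 * f (-a) 0 0)⁻¹ •
        (f a 0 0 • fderiv ℝ (g (-a) 0) 0 - f (-a) 0 0 • fderiv ℝ (g a 0) 0)) 0 := by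
  have h₁ := hasFDerivAt_fSlide_param hf hg hn (-a) 0
  have h₂ := hasDerivAt_fSlide hf hg hn (-a) 0
  simp only [neg_neg, hgm, hgp, zero_smul, zero_add, zero_mul, sub_zero] at h₁ h₂
  obtain ⟨φ, hφ0, hφ, hφeq, hφ'⟩ :=
    (contDiff_fSlide hf hg).contDiffAt.exists_implicit_of_hasDerivAt_ne_zero (u := (0, -a)) hn h₁
      (h₂.congr_deriv (by ring)) hD
  refine ⟨φ, hφ0, hφ, ?_, hφ'⟩
  simpa [fSlide, hgm, hgp] using hφeq

theorem exists_pseudoEquilibrium_branch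
    (hf : ContDiff ℝ n fun q : ℝ × ℝ × (Fin m → ℝ) => f q.1 q.2.1 q.2.2)
    (hg : ContDiff ℝ n fun q : ℝ × ℝ × (Fin m → ℝ) => g q.1 q.2.1 q.2.2)
    (hn : 2 ≤ n) {a : ℝ} (hgm : g (-a) 0 0 = 0) (hgp : g a 0 0 = 0)
    (hD : pdX g (-a) 0 0 * f a 0 0 + pdX g a 0 0 * f (-a) 0 0 ≠ 0) :
    ∃ ϖ : (Fin m → ℝ) → ℝ, ϖ 0 = a ∧ ContDiffAt ℝ n ϖ 0 ∧
      (∀ᶠ α in 𝓝 0, fSlide f g (-ϖ α) α = 0) ∧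
      (fun α => ϖ α - (a + ∑ i,
          (pdA g i (-a) 0 0 * f a 0 0 - pdA g i a 0 0 * f (-a) 0 0) /
            (pdX g (-a) 0 0 * f a 0 0 + pdX g a 0 0 * f (-a) 0 0) * α i))
        =O[𝓝 0] fun α => ‖α‖ ^ 2 := by
  obtain ⟨φ, hφ0, hφ, hφzero, hφ'⟩ :=
    exists_fSlide_eq_zero_branch hf hg (zero_lt_two.trans_le hn).ne' hgm hgp hD
  refine ⟨fun α => -φ α, by simp [hφ0], hφ.neg, by simpa using hφzero, ?_⟩
  have hϖ : (fun α => -φ α - -φ 0 - fderiv ℝ (fun α => -φ α) 0 α) =O[𝓝 0]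
      fun α => ‖α‖ ^ 2 := by
    simpa only [sub_zero] using (hφ.neg.of_le hn).isBigO_sub_sub_fderiv
  refine hϖ.congr_left fun α => ?_
  rw [fderiv_fun_neg, hφ'.fderiv, hφ0]
  simp only [neg_apply, smul_apply, sub_apply, smul_eq_mul,
    ContinuousLinearMap.apply_eq_sum_single (fderiv ℝ (g _ 0) 0) α, Finset.mul_sum,
    ← Finset.sum_sub_distrib, ← Finset.sum_neg_distrib, neg_neg, sub_sub]
  refine congrArg (fun t => -φ α - (a + t)) (Finset.sum_congr rfl fun i _ => ?_)
  simp only [pdA]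
  ring

-- `x` is meant to range near `-a`, so the conditions at `-x` are those near `+a`.
def SlidingRegularAt (f g : ℝ → ℝ → (Fin m → ℝ) → ℝ) (α : Fin m → ℝ) (x : ℝ) : Prop :=
  0 < deriv (fun x' => fSlide f g x' α) x ∧ 0 < pdX g x 0 α ∧ 0 < pdX g (-x) 0 α ∧
    0 < f x 0 α ∧ 0 < f (-x) 0 α

theorem eventually_slidingRegularAt
    (hf : ContDiff ℝ n fun q : ℝ × ℝ × (Fin m → ℝ) => f q.1 q.2.1 q.2.2)
    (hg : ContDiff ℝ n fun q : ℝ × ℝ × (Fin m → ℝ) => g q.1 q.2.1 q.2.2)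
    (hn : n ≠ 0) {a : ℝ} (hgm : g (-a) 0 0 = 0)
    (hgp : g a 0 0 = 0) (hgxm : 0 < pdX g (-a) 0 0) (hgxp : 0 < pdX g a 0 0)
    (hfm : 0 < f (-a) 0 0) (hfp : 0 < f a 0 0) :
    ∀ᶠ p : (Fin m → ℝ) × ℝ in 𝓝 (0, -a), SlidingRegularAt f g p.1 p.2 := by
  have hneg : Continuous fun p : (Fin m → ℝ) × ℝ => (p.1, -p.2) :=
    continuous_fst.prodMk continuous_snd.neg
  have hgx := hg.restrict_xAxis.continuous_deriv_comp_prodMk hn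
  have hF' : deriv (fun x' => fSlide f g x' 0) (-a) =
      pdX g (-a) 0 0 * f a 0 0 + pdX g a 0 0 * f (-a) 0 0 := by
    rw [(hasDerivAt_fSlide hf hg hn (-a) 0).deriv]
    simp only [neg_neg, hgm, hgp]
    ring
  refine (((contDiff_fSlide hf hg).continuous_deriv_comp_prodMk hn).tendsto _
    |>.eventually_const_lt ?_).and <| ((hgx.tendsto _).eventually_const_lt ?_).and <|
    (((hgx.comp hneg).tendsto _).eventually_const_lt ?_).and <|
    ((hf.restrict_xAxis.continuous.tendsto _).eventually_const_lt ?_).and <|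
    ((hf.restrict_xAxis.continuous.comp hneg).tendsto _).eventually_const_lt ?_
  · simp only [hF']; positivity
  all_goals simpa

theorem fSlide_unique_zero_of_slidingRegularAt {s : Set ℝ} (hs : Convex ℝ s) {α : Fin m → ℝ}
    (hreg : ∀ x ∈ s, SlidingRegularAt f g α x) {x₁ x₂ z : ℝ} (h₁ : x₁ ∈ s) (h₂ : x₂ ∈ s)
    (hz : z ∈ s) (hg₁ : g x₁ 0 α = 0) (hg₂ : g (-x₂) 0 α = 0) (hne : x₁ ≠ x₂)
    (hFz : fSlide f g z α = 0) :
    z ∈ Ioo (min x₁ x₂) (max x₁ x₂) ∧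
      (∀ x ∈ Ioo (min x₁ x₂) (max x₁ x₂), fSlide f g x α = 0 → x = z) ∧
      ∀ x ∈ Ioo (min x₁ x₂) (max x₁ x₂), 0 < deriv (fun x' => fSlide f g x' α) x := by
  have hF := hs.strictMonoOn_of_deriv_pos fun x hx => (hreg x hx).1
  have hgmono : StrictMonoOn (fun x => g x 0 α) s :=
    hs.strictMonoOn_of_deriv_pos fun x hx => (hreg x hx).2.1
  have hganti : StrictAntiOn (fun x => g (-x) 0 α) s := hs.strictAntiOn_of_deriv_neg fun x hx => by
    rw [deriv_comp_neg (f := fun y => g y 0 α)]; exact neg_neg_of_pos (hreg x hx).2.2.1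
  have hsign₁ : 0 < fSlide f g x₁ α * (x₁ - x₂) := by
    have hgsign := hganti.mul_sub_neg_of_eq_zero h₁ h₂ hg₂ hne
    have hfpos := (hreg x₁ h₁).2.2.2.1
    simp only [fSlide, hg₁, zero_mul, zero_sub]
    nlinarith
  have hsign₂ : 0 < fSlide f g x₂ α * (x₂ - x₁) := by
    have hgsign := hgmono.pos_mul_sub_of_eq_zero h₂ h₁ hg₁ hne.symm
    have hfpos := (hreg x₂ h₂).2.2.2.2
    simp only [fSlide, hg₂, zero_mul, sub_zero]
    nlinarith
  have hsub : Ioo (min x₁ x₂) (max x₁ x₂) ⊆ s :=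
    Ioo_subset_Icc_self.trans (hs.ordConnected.uIcc_subset h₁ h₂)
  exact ⟨hF.mem_Ioo_of_eq_zero h₁ h₂ hz hFz hsign₁ hsign₂,
    fun x hx hx0 => hF.injOn (hsub hx) hz (hx0.trans hFz.symm),
    fun x hx => (hreg x (hsub hx)).1⟩

end SlidingVectorField

theorem statement13_general
    (m k : ℕ) (hk : 3 ≤ k)
    (f g : ℝ → ℝ → (Fin m → ℝ) → ℝ)
    (hf : ContDiff ℝ k (fun q : ℝ × ℝ × (Fin m → ℝ) => f q.1 q.2.1 q.2.2))
    (hg : ContDiff ℝ k (fun q : ℝ × ℝ × (Fin m → ℝ) => g q.1 q.2.1 q.2.2))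
    (a : ℝ)
    (hfma : 0 < f (-a) 0 0)
    (H1a : g (-a) 0 0 = 0) (H1b : 0 < f (-a) 0 0 * pdX g (-a) 0 0)
    (H2'g : g a 0 0 = 0) (H2'fx : 0 < f a 0 0 * pdX g a 0 0)
    (H2'ff : 0 < f (-a) 0 0 * f a 0 0)
    (ϑm ϑp : (Fin m → ℝ) → ℝ) (U₀ : Set (Fin m → ℝ)) (hU₀ : U₀ ∈ 𝓝 (0 : Fin m → ℝ))
    (hϑmc : ContDiffOn ℝ k ϑm U₀) (hϑpc : ContDiffOn ℝ k ϑp U₀)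
    (hϑm0 : ϑm 0 = a) (hϑp0 : ϑp 0 = a)
    (hϑmz : ∀ α ∈ U₀, g (-(ϑm α)) 0 α = 0)
    (hϑpz : ∀ α ∈ U₀, g (ϑp α) 0 α = 0)
    :
    ∃ U₅ ∈ 𝓝 (0 : Fin m → ℝ), ∃ ϖ : (Fin m → ℝ) → ℝ,
      ContDiffOn ℝ k ϖ U₅ ∧
      (fun α => ϖ α - (a + ∑ i,
          (pdA g i (-a) 0 0 * f a 0 0 - pdA g i a 0 0 * f (-a) 0 0) /
            (pdX g (-a) 0 0 * f a 0 0 + pdX g a 0 0 * f (-a) 0 0) * α i))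
        =O[𝓝 0] (fun α => ‖α‖ ^ 2) ∧
      ∀ α ∈ U₅, ϑm α ≠ ϑp α →
        -(ϖ α) ∈ Set.Ioo (min (-(ϑm α)) (-(ϑp α))) (max (-(ϑm α)) (-(ϑp α))) ∧
        fSlide f g (-(ϖ α)) α = 0 ∧
        (∀ x ∈ Set.Ioo (min (-(ϑm α)) (-(ϑp α))) (max (-(ϑm α)) (-(ϑp α))),
          fSlide f g x α = 0 → x = -(ϖ α)) ∧
        (∀ x ∈ Set.Ioo (min (-(ϑm α)) (-(ϑp α))) (max (-(ϑm α)) (-(ϑp α))),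
          0 < deriv (fun x' => fSlide f g x' α) x) := by
  have hk0 : (k : ℕ∞ω) ≠ 0 := by exact_mod_cast (by omega : k ≠ 0)
  have hgxm : 0 < pdX g (-a) 0 0 := pos_of_mul_pos_right H1b hfma.le
  have hfp : 0 < f a 0 0 := pos_of_mul_pos_right H2'ff hfma.le
  have hgxp : 0 < pdX g a 0 0 := pos_of_mul_pos_right H2'fx hfp.le
  obtain ⟨ϖ, hϖ0, hϖ, hϖzero, hϖexp⟩ := exists_pseudoEquilibrium_branch hf hg
    (by exact_mod_cast (by omega : 2 ≤ k)) H1a H2'g (by positivity)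
  obtain ⟨ε, hε, hreg⟩ := eventually_nhds_iff_ball.1
    (eventually_slidingRegularAt hf hg hk0 H1a H2'g hgxm hgxp hfma hfp)
  have hnear : ∀ ψ : (Fin m → ℝ) → ℝ, ContinuousAt ψ 0 → ψ 0 = a →
      ∀ᶠ α in 𝓝 0, -ψ α ∈ ball (-a) ε := fun ψ hψ hψ0 =>
    hψ.neg.preimage_mem_nhds (by simpa [hψ0] using ball_mem_nhds (-a) hε)
  refine ⟨{α | α ∈ U₀ ∧ α ∈ ball 0 ε ∧ -ϑm α ∈ ball (-a) ε ∧ -ϑp α ∈ ball (-a) ε ∧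
      -ϖ α ∈ ball (-a) ε ∧ fSlide f g (-ϖ α) α = 0 ∧ ContDiffAt ℝ k ϖ α}, ?_, ϖ,
      fun α hα => hα.2.2.2.2.2.2.contDiffWithinAt, hϖexp, ?_⟩
  · filter_upwards [hU₀, ball_mem_nhds 0 hε, hnear ϑm (hϑmc.continuousOn.continuousAt hU₀) hϑm0,
      hnear ϑp (hϑpc.continuousOn.continuousAt hU₀) hϑp0, hnear ϖ hϖ.continuousAt hϖ0, hϖzero,
      hϖ.eventually (by simp)] with α h₁ h₂ h₃ h₄ h₅ h₆ h₇
    exact ⟨h₁, h₂, h₃, h₄, h₅, h₆, h₇⟩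
  · rintro α ⟨hαU, hαε, hm, hp, hz, hFz, -⟩ hne
    have hreg' : ∀ x ∈ ball (-a) ε, SlidingRegularAt f g α x := fun x hx =>
      hreg (α, x) (by rw [← ball_prod_same]; exact ⟨hαε, hx⟩)
    obtain ⟨hmem, huniq, hderiv⟩ := fSlide_unique_zero_of_slidingRegularAt (convex_ball _ _)
      hreg' hm hp hz (hϑmz α hαU) (by simpa using hϑpz α hαU) (by simpa using hne) hFz
    exact ⟨hmem, hFz, huniq, hderiv⟩

/-- the pseudo-equilibrium: there is a smooth `ϖ(α)` with the stated
linear expansion such that whenever `ϑ₁⁻(α) ≠ ϑ₁⁺(α)`, `x = −ϖ(α)` is the unique zero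
of `f^s(·;α) = g⁺(·,0;α)f⁺(−·,0;α) − g⁺(−·,0;α)f⁺(·,0;α)` in the open interval with
endpoints `−ϑ₁⁻(α)` and `−ϑ₁⁺(α)`, and `f^s_x > 0` on that interval. -/
theorem statement13
    (m k : ℕ) (hk : 3 ≤ k)
    (f g : ℝ → ℝ → (Fin m → ℝ) → ℝ)
    (hf : ContDiff ℝ k (fun q : ℝ × ℝ × (Fin m → ℝ) => f q.1 q.2.1 q.2.2))
    (hg : ContDiff ℝ k (fun q : ℝ × ℝ × (Fin m → ℝ) => g q.1 q.2.1 q.2.2))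
    (a : ℝ) (ha : 0 < a)
    (hfma : 0 < f (-a) 0 0)
    (H1a : g (-a) 0 0 = 0) (H1b : 0 < f (-a) 0 0 * pdX g (-a) 0 0)
    (H2'g : g a 0 0 = 0) (H2'fx : 0 < f a 0 0 * pdX g a 0 0)
    (H2'ff : 0 < f (-a) 0 0 * f a 0 0)
    (ϑm ϑp : (Fin m → ℝ) → ℝ) (U₀ : Set (Fin m → ℝ)) (hU₀ : U₀ ∈ 𝓝 (0 : Fin m → ℝ))
    (hϑmc : ContDiffOn ℝ k ϑm U₀) (hϑpc : ContDiffOn ℝ k ϑp U₀)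
    (hϑm0 : ϑm 0 = a) (hϑp0 : ϑp 0 = a)
    (hϑmz : ∀ α ∈ U₀, g (-(ϑm α)) 0 α = 0)
    (hϑpz : ∀ α ∈ U₀, g (ϑp α) 0 α = 0)
    :
    ∃ U₅ ∈ 𝓝 (0 : Fin m → ℝ), ∃ ϖ : (Fin m → ℝ) → ℝ,
      ContDiffOn ℝ k ϖ U₅ ∧
      (fun α => ϖ α - (a + ∑ i,
          (pdA g i (-a) 0 0 * f a 0 0 - pdA g i a 0 0 * f (-a) 0 0) /
            (pdX g (-a) 0 0 * f a 0 0 + pdX g a 0 0 * f (-a) 0 0) * α i))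
        =O[𝓝 0] (fun α => ‖α‖ ^ 2) ∧
      ∀ α ∈ U₅, ϑm α ≠ ϑp α →
        -(ϖ α) ∈ Set.Ioo (min (-(ϑm α)) (-(ϑp α))) (max (-(ϑm α)) (-(ϑp α))) ∧
        fSlide f g (-(ϖ α)) α = 0 ∧
        (∀ x ∈ Set.Ioo (min (-(ϑm α)) (-(ϑp α))) (max (-(ϑm α)) (-(ϑp α))),
          fSlide f g x α = 0 → x = -(ϖ α)) ∧
        (∀ x ∈ Set.Ioo (min (-(ϑm α)) (-(ϑp α))) (max (-(ϑm α)) (-(ϑp α))),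
          0 < deriv (fun x' => fSlide f g x' α) x) :=
  statement13_general m k hk f g hf hg a hfma H1a H1b H2'g H2'fx H2'ff ϑm ϑp U₀ hU₀ hϑmc hϑpc hϑm0
    hϑp0 hϑmz hϑpz
end
end
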